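/- arXiv:1811.01597 — 8 statements merged into one kernel-verified Lean document; each statement's English description precedes it below -/
import Mathlib

section
/- Let λ > 0 and let X be a real-valued random variable with X ≤ 1 almost surely and with X and X² integrable. Then E[e^{λX}] ≤ exp(λ·E[X] + (e^λ − λ − 1)·E[X²]). -/
/-!
Taylor's formula with integral remainder gives `exp t - t - 1 = t² ∫₀¹ (1 - s) e^{ts} ds`, and the
integral is monotone in `t`. Hence for `t ≤ λ` the quadratic coefficient `(exp t - t - 1) / t²` is at
most `(e^λ - λ - 1) / λ²`, so `e^{λx} ≤ 1 + λx + (e^λ - λ - 1) x²` whenever `x ≤ 1`. Taking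
expectations and using `1 + y ≤ e^y` gives the bound.
-/

open MeasureTheory Real

theorem exp_sub_sub_one_eq_sq_mul_integral (t : ℝ) :
    exp t - t - 1 = t ^ 2 * ∫ s in (0 : ℝ)..1, (1 - s) * exp (t * s) := by
  have hderiv : ∀ s ∈ Set.uIcc (0 : ℝ) 1,
      HasDerivAt (fun s => t * (1 - s) * exp (t * s) + exp (t * s))
        (t ^ 2 * ((1 - s) * exp (t * s))) s := by
    intro s _
    have hexp : HasDerivAt (fun s => exp (t * s)) (exp (t * s) * t) s :=
      ((hasDerivAt_id s).const_mul t).exp.congr_deriv (by simp)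
    exact ((((hasDerivAt_id s).const_sub 1).const_mul t).mul hexp |>.add hexp).congr_deriv
      (by simp only [id]; ring)
  rw [← intervalIntegral.integral_const_mul,
    intervalIntegral.integral_eq_sub_of_hasDerivAt hderiv
      ((by fun_prop : Continuous _).intervalIntegrable _ _)]
  simp only [sub_self, mul_zero, mul_one, zero_mul, zero_add, sub_zero, exp_zero]
  ring

theorem integral_one_sub_mul_exp_mul_mono :
    Monotone fun t : ℝ => ∫ s in (0 : ℝ)..1, (1 - s) * exp (t * s) := by
  intro t c htc
  refine intervalIntegral.integral_mono_on zero_le_one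
    ((by fun_prop : Continuous _).intervalIntegrable _ _)
    ((by fun_prop : Continuous _).intervalIntegrable _ _) fun s hs => ?_
  have hs1 : 0 ≤ 1 - s := by linarith [hs.2]
  gcongr
  exact hs.1

theorem exp_le_one_add_add_mul_sq_of_le {c t : ℝ} (hc : 0 < c) (htc : t ≤ c) :
    exp t ≤ 1 + t + (exp c - c - 1) / c ^ 2 * t ^ 2 := by
  have hcoeff : (exp c - c - 1) / c ^ 2 = ∫ s in (0 : ℝ)..1, (1 - s) * exp (c * s) := by
    rw [exp_sub_sub_one_eq_sq_mul_integral c]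
    field_simp
  have hmono := integral_one_sub_mul_exp_mul_mono htc
  rw [hcoeff]
  linarith [exp_sub_sub_one_eq_sq_mul_integral t, mul_le_mul_of_nonneg_left hmono (sq_nonneg t)]

theorem exp_mul_le_of_le_one {lam x : ℝ} (hlam : 0 < lam) (hx : x ≤ 1) :
    exp (lam * x) ≤ 1 + lam * x + (exp lam - lam - 1) * x ^ 2 := by
  have h := exp_le_one_add_add_mul_sq_of_le hlam (mul_le_of_le_one_right hlam.le hx)
  rwa [mul_pow, ← mul_assoc, div_mul_cancel₀ _ (by positivity)] at h

/-- **MGF bound (Lemma 2.3).** If `X ≤ 1` almost surely and `X`, `X²` are integrable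
on a probability space, then for every `λ > 0`,
`E[e^{λX}] ≤ exp(λ·E[X] + (e^λ − λ − 1)·E[X²])`. -/
theorem integral_exp_le_of_le_one {Ω : Type*} [MeasurableSpace Ω] (μ : Measure Ω)
    [IsProbabilityMeasure μ] (X : Ω → ℝ) (lam : ℝ) (hlam : 0 < lam)
    (hX1 : ∀ᵐ ω ∂μ, X ω ≤ 1)
    (hX : Integrable X μ) (hX2 : Integrable (fun ω => (X ω) ^ 2) μ) :
    ∫ ω, Real.exp (lam * X ω) ∂μ ≤
      Real.exp (lam * ∫ ω, X ω ∂μ + (Real.exp lam - lam - 1) * ∫ ω, (X ω) ^ 2 ∂μ) := by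
  set g := exp lam - lam - 1
  have hpointwise : ∀ᵐ ω ∂μ, exp (lam * X ω) ≤ 1 + lam * X ω + g * X ω ^ 2 := by
    filter_upwards [hX1] with ω hω using exp_mul_le_of_le_one hlam hω
  have hbound : Integrable (fun ω => 1 + lam * X ω + g * X ω ^ 2) μ :=
    ((integrable_const 1).add (hX.const_mul lam)).add (hX2.const_mul g)
  have hexp : Integrable (fun ω => exp (lam * X ω)) μ := by
    refine hbound.mono' (by fun_prop) ?_
    filter_upwards [hpointwise] with ω hω
    rwa [norm_of_nonneg (exp_pos _).le]
  calc ∫ ω, exp (lam * X ω) ∂μ ≤ ∫ ω, (1 + lam * X ω + g * X ω ^ 2) ∂μ :=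
        integral_mono_ae hexp hbound hpointwise
    _ = lam * ∫ ω, X ω ∂μ + g * ∫ ω, X ω ^ 2 ∂μ + 1 := by
        rw [integral_add (by fun_prop) (hX2.const_mul g),
          integral_add (integrable_const 1) (hX.const_mul lam), integral_const,
          integral_const_mul, integral_const_mul]
        simp only [probReal_univ, smul_eq_mul, one_mul]
        ring
    _ ≤ exp (lam * ∫ ω, X ω ∂μ + g * ∫ ω, X ω ^ 2 ∂μ) := add_one_le_exp _
end

section
/- Let (Z_k)_{k=0,1,…,K} be a sequence of integrable real random variables adapted to a filtration (F_k), with Z_0 deterministic (constant). Set Y_k := Z_k − Z_{k−1} for k ≥ 1 and suppose Y_k ≤ 1 almost surely for all k, and that for some 0 < α < 1 and all k = 1,…,K one has E[Y_k | F_{k−1}] ≤ −α·E[Y_k² | F_{k−1}] almost surely. Then for every t ≥ 0, P[Z_K − Z_0 > t] ≤ exp(−α t). -/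
/-!
Since `α * Y_k ≤ 1` and `exp x ≤ 1 + x + x²` for `x ≤ 1`, the drift condition gives
`E[exp (α Y_k) | ℱ_{k-1}] ≤ 1 + α E[Y_k | ℱ_{k-1}] + α² E[Y_k² | ℱ_{k-1}] ≤ 1`.
Pulling out the `ℱ_{k-1}`-measurable factor `exp (α (Z_{k-1} - Z_0))` shows that
`E[exp (α (Z_k - Z_0))]` is non-increasing in `k`, hence at most `1`, and the Chernoff bound
`P[Z_K - Z_0 ≥ t] ≤ exp (-α t) E[exp (α (Z_K - Z_0))]` concludes.
-/

open MeasureTheory ProbabilityTheory Real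

theorem Real.exp_le_one_add_add_sq {x : ℝ} (hx : x ≤ 1) : exp x ≤ 1 + x + x ^ 2 := by
  rcases le_total (-1) x with h | h
  · have := (abs_le.1 (abs_exp_sub_one_sub_id_le (abs_le.2 ⟨h, hx⟩))).2
    linarith
  · have := exp_le_one_iff.2 (by linarith : x ≤ 0)
    nlinarith

section OneStep

variable {Ω : Type*} {m m₀ : MeasurableSpace Ω} {μ : Measure Ω} {Y : Ω → ℝ} {α : ℝ}

theorem condExp_one_add_mul_add_sq_ae_eq [IsFiniteMeasure μ] (hm : m ≤ m₀) (hY : Integrable Y μ)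
    (hY2 : Integrable (fun ω => Y ω ^ 2) μ) :
    μ[fun ω => 1 + α * Y ω + α ^ 2 * Y ω ^ 2 | m] =ᵐ[μ]
      fun ω => 1 + α * μ[Y | m] ω + α ^ 2 * μ[fun ω => Y ω ^ 2 | m] ω := by
  have hsplit : (fun ω => 1 + α * Y ω + α ^ 2 * Y ω ^ 2) =
      (fun _ => (1 : ℝ)) + (α • Y + α ^ 2 • fun ω => Y ω ^ 2) := by
    funext ω; simp only [Pi.add_apply, Pi.smul_apply, smul_eq_mul]; ring
  rw [hsplit]
  filter_upwards [condExp_add (integrable_const 1) ((hY.smul α).add (hY2.smul (α ^ 2))) m,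
    condExp_add (hY.smul α) (hY2.smul (α ^ 2)) m, condExp_smul α Y m,
    condExp_smul (α ^ 2) (fun ω => Y ω ^ 2) m] with ω h₁ h₂ h₃ h₄
  rw [h₁, Pi.add_apply, h₂, Pi.add_apply, h₃, h₄, condExp_const hm]
  simp only [Pi.smul_apply, smul_eq_mul, add_assoc]

theorem condExp_exp_mul_le_one [IsFiniteMeasure μ] (hm : m ≤ m₀) (hY : Integrable Y μ)
    (hY2 : Integrable (fun ω => Y ω ^ 2) μ) (hY1 : ∀ᵐ ω ∂μ, Y ω ≤ 1) (hα0 : 0 ≤ α)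
    (hα1 : α ≤ 1)
    (hdrift : μ[Y | m] ≤ᵐ[μ] fun ω => -α * μ[fun ω => Y ω ^ 2 | m] ω) :
    μ[fun ω => exp (α * Y ω) | m] ≤ᵐ[μ] 1 := by
  have hexp_le : (fun ω => exp (α * Y ω)) ≤ᵐ[μ] fun ω => 1 + α * Y ω + α ^ 2 * Y ω ^ 2 := by
    filter_upwards [hY1] with ω hω
    have := exp_le_one_add_add_sq (x := α * Y ω) (by nlinarith)
    linarith
  have hmono := condExp_mono (m := m) (g := fun ω => 1 + α * Y ω + α ^ 2 * Y ω ^ 2)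
    (integrable_exp_mul_of_le α 1 hα0 hY.aemeasurable hY1)
    (((integrable_const 1).add (hY.const_mul α)).add (hY2.const_mul (α ^ 2))) hexp_le
  filter_upwards [hmono, condExp_one_add_mul_add_sq_ae_eq (α := α) hm hY hY2, hdrift]
    with ω h_mono h_eq h_drift
  have := mul_le_mul_of_nonneg_left h_drift hα0
  rw [h_eq] at h_mono
  simp only [Pi.one_apply]
  linarith

theorem integral_mul_le_of_condExp_le_one [IsFiniteMeasure μ] (hm : m ≤ m₀) {f g : Ω → ℝ}
    (hf : StronglyMeasurable[m] f) (hf0 : 0 ≤ᵐ[μ] f) (hf_int : Integrable f μ)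
    (hg : Integrable g μ) (hfg : Integrable (f * g) μ) (hg1 : μ[g | m] ≤ᵐ[μ] 1) :
    ∫ ω, (f * g) ω ∂μ ≤ ∫ ω, f ω ∂μ := by
  have hpull := condExp_mul_of_stronglyMeasurable_left hf hfg hg
  calc ∫ ω, (f * g) ω ∂μ = ∫ ω, μ[f * g | m] ω ∂μ := (integral_condExp hm).symm
    _ = ∫ ω, (f * μ[g | m]) ω ∂μ := integral_congr_ae hpull
    _ ≤ ∫ ω, f ω ∂μ := by
      refine integral_mono_ae (integrable_condExp.congr hpull) hf_int ?_
      filter_upwards [hf0, hg1] with ω h0 h1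
      simpa using mul_le_of_le_one_right h0 h1

end OneStep

section ExponentialMoment

variable {Ω : Type*} {m : MeasurableSpace Ω} {μ : Measure Ω} {Z : ℕ → Ω → ℝ} {K : ℕ} {α : ℝ}

theorem ae_sub_le_of_increment_le_one (hY1 : ∀ n < K, ∀ᵐ ω ∂μ, Z (n + 1) ω - Z n ω ≤ 1) :
    ∀ k ≤ K, ∀ᵐ ω ∂μ, Z k ω - Z 0 ω ≤ k := by
  intro k hk
  induction k with
  | zero => simp
  | succ n ih =>
    filter_upwards [ih (by omega), hY1 n hk] with ω h₁ h₂
    push_cast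
    linarith

theorem integrable_exp_mul_sub [IsFiniteMeasure μ] (hint : ∀ k, Integrable (Z k) μ)
    (hY1 : ∀ n < K, ∀ᵐ ω ∂μ, Z (n + 1) ω - Z n ω ≤ 1) (hα0 : 0 ≤ α) {k : ℕ} (hk : k ≤ K) :
    Integrable (fun ω => exp (α * (Z k ω - Z 0 ω))) μ :=
  integrable_exp_mul_of_le α k hα0 ((hint k).sub (hint 0)).aemeasurable
    (ae_sub_le_of_increment_le_one hY1 k hk)

theorem integral_exp_mul_sub_le_one [IsProbabilityMeasure μ] {ℱ : Filtration ℕ m}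
    (hadp : Adapted ℱ Z) (hint : ∀ k, Integrable (Z k) μ)
    (hint2 : ∀ n < K, Integrable (fun ω => (Z (n + 1) ω - Z n ω) ^ 2) μ)
    (hY1 : ∀ n < K, ∀ᵐ ω ∂μ, Z (n + 1) ω - Z n ω ≤ 1) (hα0 : 0 ≤ α) (hα1 : α ≤ 1)
    (hdrift : ∀ n < K, μ[fun ω => Z (n + 1) ω - Z n ω | ℱ n] ≤ᵐ[μ]
      fun ω => -α * μ[fun ω => (Z (n + 1) ω - Z n ω) ^ 2 | ℱ n] ω) :
    ∀ k ≤ K, ∫ ω, exp (α * (Z k ω - Z 0 ω)) ∂μ ≤ 1 := by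
  intro k hk
  induction k with
  | zero => simp
  | succ n ih =>
    have hn : n < K := hk
    have hW_succ : (fun ω => exp (α * (Z (n + 1) ω - Z 0 ω))) =
        (fun ω => exp (α * (Z n ω - Z 0 ω))) * fun ω => exp (α * (Z (n + 1) ω - Z n ω)) := by
      funext ω
      rw [Pi.mul_apply, ← exp_add]
      ring_nf
    have hW_meas : StronglyMeasurable[ℱ n] fun ω => exp (α * (Z n ω - Z 0 ω)) :=
      (((hadp n).sub ((hadp 0).mono (ℱ.mono n.zero_le) le_rfl)).const_mul α).exp.stronglyMeasurable
    have hY : Integrable (fun ω => Z (n + 1) ω - Z n ω) μ := (hint (n + 1)).sub (hint n)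
    rw [hW_succ]
    refine (integral_mul_le_of_condExp_le_one (ℱ.le n) hW_meas
      (.of_forall fun ω => (exp_pos _).le) (integrable_exp_mul_sub hint hY1 hα0 hn.le)
      (integrable_exp_mul_of_le α 1 hα0 hY.aemeasurable (hY1 n hn))
      (hW_succ ▸ integrable_exp_mul_sub hint hY1 hα0 hk)
      (condExp_exp_mul_le_one (ℱ.le n) hY (hint2 n hn) (hY1 n hn) hα0 hα1 (hdrift n hn))).trans
      (ih hn.le)

end ExponentialMoment

theorem freedman_type_inequality_general {Ω : Type*} {m : MeasurableSpace Ω} (μ : Measure Ω)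
    [IsProbabilityMeasure μ] (K : ℕ) (ℱ : Filtration ℕ m) (Z : ℕ → Ω → ℝ)
    (hadp : Adapted ℱ Z) (hint : ∀ k, Integrable (Z k) μ)
    (hint2 : ∀ k, 1 ≤ k → k ≤ K → Integrable (fun ω => (Z k ω - Z (k - 1) ω) ^ 2) μ)
    (hY1 : ∀ k, 1 ≤ k → k ≤ K → ∀ᵐ ω ∂μ, Z k ω - Z (k - 1) ω ≤ 1)
    (α : ℝ) (hα0 : 0 < α) (hα1 : α < 1)
    (hdrift : ∀ k, 1 ≤ k → k ≤ K →
      μ[fun ω => Z k ω - Z (k - 1) ω | ℱ (k - 1)] ≤ᵐ[μ]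
        fun ω => -α * (μ[fun ω' => (Z k ω' - Z (k - 1) ω') ^ 2 | ℱ (k - 1)]) ω)
    (t : ℝ) :
    (μ {ω | t < Z K ω - Z 0 ω}).toReal ≤ Real.exp (-α * t) := by
  have hY1' : ∀ n < K, ∀ᵐ ω ∂μ, Z (n + 1) ω - Z n ω ≤ 1 := fun n hn => hY1 (n + 1) n.succ_pos hn
  have hmgf : mgf (fun ω => Z K ω - Z 0 ω) μ α ≤ 1 :=
    integral_exp_mul_sub_le_one hadp hint (fun n hn => hint2 (n + 1) n.succ_pos hn) hY1'
      hα0.le hα1.le (fun n hn => hdrift (n + 1) n.succ_pos hn) K le_rfl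
  calc μ.real {ω | t < Z K ω - Z 0 ω} ≤ μ.real {ω | t ≤ Z K ω - Z 0 ω} :=
        measureReal_mono fun ω (hω : t < _) => hω.le
    _ ≤ exp (-α * t) * mgf (fun ω => Z K ω - Z 0 ω) μ α :=
        measure_ge_le_exp_mul_mgf t hα0.le (integrable_exp_mul_sub hint hY1' hα0.le le_rfl)
    _ ≤ exp (-α * t) := mul_le_of_le_one_right (exp_pos _).le hmgf

/-- **Freedman-type martingale inequality (Lemma 2.2).**
Let `(Z_k)_{k=0,…,K}` be integrable random variables adapted to a filtration `(ℱ_k)`,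
with `Z_0` almost surely constant. Set `Y_k := Z_k − Z_{k−1}` and suppose `Y_k ≤ 1`
almost surely, `Y_k²` is integrable, and `E[Y_k | ℱ_{k−1}] ≤ −α·E[Y_k² | ℱ_{k−1}]`
almost surely for all `1 ≤ k ≤ K`, where `0 < α < 1`. Then for all `t ≥ 0`,
`P[Z_K − Z_0 > t] ≤ exp(−α t)`. -/
theorem freedman_type_inequality {Ω : Type*} {m : MeasurableSpace Ω} (μ : Measure Ω)
    [IsProbabilityMeasure μ] (K : ℕ) (ℱ : Filtration ℕ m) (Z : ℕ → Ω → ℝ)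
    (hadp : Adapted ℱ Z) (hint : ∀ k, Integrable (Z k) μ)
    (hint2 : ∀ k, 1 ≤ k → k ≤ K → Integrable (fun ω => (Z k ω - Z (k - 1) ω) ^ 2) μ)
    (hZ0 : ∃ c : ℝ, ∀ᵐ ω ∂μ, Z 0 ω = c)
    (hY1 : ∀ k, 1 ≤ k → k ≤ K → ∀ᵐ ω ∂μ, Z k ω - Z (k - 1) ω ≤ 1)
    (α : ℝ) (hα0 : 0 < α) (hα1 : α < 1)
    (hdrift : ∀ k, 1 ≤ k → k ≤ K →
      μ[fun ω => Z k ω - Z (k - 1) ω | ℱ (k - 1)] ≤ᵐ[μ]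
        fun ω => -α * (μ[fun ω' => (Z k ω' - Z (k - 1) ω') ^ 2 | ℱ (k - 1)]) ω)
    (t : ℝ) (ht : 0 ≤ t) :
    (μ {ω | t < Z K ω - Z 0 ω}).toReal ≤ Real.exp (-α * t) :=
  freedman_type_inequality_general μ K ℱ Z hadp hint hint2 hY1 α hα0 hα1 hdrift t
end

section
/- Let W ⊆ ℝⁿ be a linear subspace with dim(W) ≤ (1−δ)n for some δ > 0, and let a > 0 and η > 1 satisfy 1/η + a ≤ δ. Then there exists a real symmetric positive semidefinite n×n matrix U such that: (i) wᵀUw = 0 for all w ∈ W; (ii) U_{ii} ≤ 1 for all i ∈ [n]; (iii) Tr(U) ≥ a·n; and (iv) η·diag(U) − U is positive semidefinite, where diag(U) is the diagonal matrix with entries U_{ii}. -/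
/-!
Let the columns of `A` span `W`. For weights `d ∈ [0,1]ⁿ` and `ε > 0` put `S = AᵀDA + εI` and
`U = D - DAS⁻¹AᵀD`. Then `xᵀUx = min_v (x - Av)ᵀD(x - Av) + ε|v|²`, so `0 ⪯ U ⪯ D` and
`(Av)ᵀU(Av) ≤ ε|v|²`. Moreover `U_ii = d_i (1 - q_i)`, where the leverage scores
`q_i = d_i a_iᵀS⁻¹a_i` sum to at most `k = dim W`. By Sherman–Morrison `q_i = t/(1+t)` with
`t = d_i ℓ_i`, where `ℓ_i` is the leverage of row `i` with `d_i` set to `0`; it is antitone in `d`.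
Hence `d ↦ (η - 1) / max (ℓ_i(d), η - 1)` is monotone on `[0,1]ⁿ` and has a fixed point
(Knaster–Tarski), at which `q_i ≤ λ := 1 - 1/η`, with equality where `d_i < 1`. This gives
`D ⪯ η diag U` and `U_ii ≥ 1 - q_i/λ`, so `Tr U ≥ n - k/λ ≥ a n`. Finally, the admissible `U` form
a compact set, so letting `ε → 0` yields one with `AᵀUA = 0`.
-/

open Matrix
open scoped MatrixOrder

lemma Function.update_zero_nonneg {ι α : Type*} [DecidableEq ι] [Preorder α] [Zero α]
    {d : ι → α} (hd : 0 ≤ d) (i : ι) : 0 ≤ Function.update d i 0 :=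
  le_update_iff.2 ⟨le_rfl, fun j _ => hd j⟩

theorem IsCompact.exists_le_of_forall_exists_le_add {X : Type*} [TopologicalSpace X] {K : Set X}
    (hK : IsCompact K) {f : X → ℝ} (hf : ContinuousOn f K) {a : ℝ}
    (h : ∀ ε > 0, ∃ x ∈ K, f x ≤ a + ε) : ∃ x ∈ K, f x ≤ a := by
  obtain ⟨x₀, hx₀, -⟩ := h 1 one_pos
  obtain ⟨x, hx, hmin⟩ := hK.exists_isMinOn ⟨x₀, hx₀⟩ hf
  refine ⟨x, hx, le_of_forall_pos_le_add fun ε hε => ?_⟩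
  obtain ⟨y, hy, hfy⟩ := h ε hε
  exact (hmin hy).trans hfy

theorem exists_fixedPoint_of_monotoneOn_Icc {α : Type*} [ConditionallyCompleteLattice α]
    {a b : α} (hab : a ≤ b) {f : α → α} (hf : MonotoneOn f (Set.Icc a b))
    (hmaps : Set.MapsTo f (Set.Icc a b) (Set.Icc a b)) : ∃ x ∈ Set.Icc a b, f x = x := by
  have : Fact (a ≤ b) := ⟨hab⟩
  let g : Set.Icc a b →o Set.Icc a b := ⟨hmaps.restrict, fun x y hxy => hf x.2 y.2 hxy⟩
  exact ⟨g.lfp, g.lfp.2, congrArg Subtype.val g.map_lfp⟩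

namespace Matrix

section Quadratic

variable {κ : Type*} [Fintype κ]

lemma PosSemidef.dotProduct_mulVec_self_nonneg {M : Matrix κ κ ℝ} (hM : M.PosSemidef)
    (x : κ → ℝ) : 0 ≤ x ⬝ᵥ M *ᵥ x := by
  simpa using hM.dotProduct_mulVec_nonneg x

lemma IsHermitian.dotProduct_mulVec_comm {M : Matrix κ κ ℝ} (hM : M.IsHermitian)
    (x y : κ → ℝ) : x ⬝ᵥ M *ᵥ y = y ⬝ᵥ M *ᵥ x := by
  rw [dotProduct_mulVec, ← mulVec_transpose, ← conjTranspose_eq_transpose_of_trivial, hM.eq,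
    dotProduct_comm]

lemma IsHermitian.dotProduct_sub_mulVec_sub {M : Matrix κ κ ℝ} (hM : M.IsHermitian)
    (x y : κ → ℝ) :
    (x - y) ⬝ᵥ M *ᵥ (x - y) = x ⬝ᵥ M *ᵥ x - 2 * (x ⬝ᵥ M *ᵥ y) + y ⬝ᵥ M *ᵥ y := by
  rw [mulVec_sub, sub_dotProduct, dotProduct_sub, dotProduct_sub, hM.dotProduct_mulVec_comm y x]
  ring

lemma mul_mul_transpose_apply_self {R ι : Type*} [CommSemiring R] (A : Matrix ι κ R)
    (T : Matrix κ κ R) (i : ι) : (A * T * Aᵀ) i i = A i ⬝ᵥ T *ᵥ A i := by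
  rw [Matrix.mul_apply, dotProduct_mulVec]
  rfl

lemma isClosed_setOf_posSemidef : IsClosed {M : Matrix κ κ ℝ | M.PosSemidef} := by
  have : {M : Matrix κ κ ℝ | M.PosSemidef}
      = {M | Mᴴ = M} ∩ ⋂ x : κ → ℝ, {M | 0 ≤ star x ⬝ᵥ M *ᵥ x} := by
    ext M
    simp [posSemidef_iff_dotProduct_mulVec, IsHermitian]
  rw [this]
  exact (isClosed_eq (by fun_prop) continuous_id).inter
    (isClosed_iInter fun x => isClosed_le continuous_const (by fun_prop))

lemma dotProduct_mulVec_mulVec {ι : Type*} [Fintype ι] (A : Matrix ι κ ℝ) (U : Matrix ι ι ℝ)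
    (v : κ → ℝ) : (A *ᵥ v) ⬝ᵥ U *ᵥ (A *ᵥ v) = v ⬝ᵥ (Aᵀ * U * A) *ᵥ v := by
  rw [← mulVec_mulVec, ← mulVec_mulVec, dotProduct_transpose_mulVec, dotProduct_comm]

lemma posSemidef_vecMulVec_self (a : κ → ℝ) : (vecMulVec a a).PosSemidef := by
  simpa using posSemidef_vecMulVec_self_star a

lemma posSemidef_transpose_mul_diagonal_mul {ι : Type*} [Fintype ι] [DecidableEq ι]
    (A : Matrix ι κ ℝ) {d : ι → ℝ} (hd : 0 ≤ d) : (Aᵀ * diagonal d * A).PosSemidef := by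
  simpa [conjTranspose_eq_transpose_of_trivial] using
    (PosSemidef.diagonal hd).conjTranspose_mul_mul_same A

variable [DecidableEq κ]

lemma PosDef.mulVec_inv_mulVec {S : Matrix κ κ ℝ} (hS : S.PosDef) (y : κ → ℝ) :
    S *ᵥ (S⁻¹ *ᵥ y) = y := by
  rw [mulVec_mulVec, mul_nonsing_inv _ ((isUnit_iff_isUnit_det S).1 hS.isUnit), one_mulVec]

lemma PosDef.inv_mulVec_mulVec {S : Matrix κ κ ℝ} (hS : S.PosDef) (y : κ → ℝ) :
    S⁻¹ *ᵥ (S *ᵥ y) = y := by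
  rw [mulVec_mulVec, nonsing_inv_mul _ ((isUnit_iff_isUnit_det S).1 hS.isUnit), one_mulVec]

lemma PosSemidef.two_mul_abs_apply_le {M : Matrix κ κ ℝ} (hM : M.PosSemidef) (i j : κ) :
    2 * |M i j| ≤ M i i + M j j := by
  have hsym : M j i = M i j := by simpa using hM.isHermitian.apply i j
  have hp := hM.dotProduct_mulVec_nonneg (Pi.single i 1 + Pi.single j 1)
  have hm := hM.dotProduct_mulVec_nonneg (Pi.single i 1 - Pi.single j 1)
  simp only [star_trivial, mulVec_add, mulVec_sub, dotProduct_add, dotProduct_sub, add_dotProduct,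
    sub_dotProduct, mulVec_single_one, single_one_dotProduct, col_apply, hsym] at hp hm
  cases abs_cases (M i j) <;> linarith

lemma trace_transpose_mul_mul_le {ι : Type*} [Fintype ι] (A : Matrix ι κ ℝ)
    {U : Matrix ι ι ℝ} {ε : ℝ}
    (h : ∀ v, (A *ᵥ v) ⬝ᵥ U *ᵥ (A *ᵥ v) ≤ ε * (v ⬝ᵥ v)) :
    (Aᵀ * U * A).trace ≤ ε * Fintype.card κ := by
  calc (Aᵀ * U * A).trace = ∑ j, (A *ᵥ Pi.single j 1) ⬝ᵥ U *ᵥ (A *ᵥ Pi.single j 1) := by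
        simp_rw [dotProduct_mulVec_mulVec, mulVec_single_one, single_one_dotProduct]
        rfl
    _ ≤ ∑ j : κ, ε * (Pi.single j 1 ⬝ᵥ Pi.single j (1 : ℝ)) := Finset.sum_le_sum fun j _ => h _
    _ = ε * Fintype.card κ := by simp [mul_comm]

lemma PosDef.dotProduct_mulVec_sub_inv_mulVec {S : Matrix κ κ ℝ} (hS : S.PosDef) (y v : κ → ℝ) :
    (v - S⁻¹ *ᵥ y) ⬝ᵥ S *ᵥ (v - S⁻¹ *ᵥ y) = v ⬝ᵥ S *ᵥ v - 2 * (y ⬝ᵥ v) + y ⬝ᵥ S⁻¹ *ᵥ y := by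
  rw [mulVec_sub, hS.mulVec_inv_mulVec, sub_dotProduct, dotProduct_sub, dotProduct_sub,
    hS.isHermitian.dotProduct_mulVec_comm (S⁻¹ *ᵥ y) v, hS.mulVec_inv_mulVec, dotProduct_comm v y,
    dotProduct_comm _ y]
  ring

lemma PosDef.two_mul_dotProduct_sub_le {S : Matrix κ κ ℝ} (hS : S.PosDef) (y v : κ → ℝ) :
    2 * (y ⬝ᵥ v) - v ⬝ᵥ S *ᵥ v ≤ y ⬝ᵥ S⁻¹ *ᵥ y := by
  have := hS.posSemidef.dotProduct_mulVec_self_nonneg (v - S⁻¹ *ᵥ y)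
  rw [hS.dotProduct_mulVec_sub_inv_mulVec] at this
  linarith

lemma PosDef.dotProduct_inv_mulVec_antitone {S S' : Matrix κ κ ℝ} (hS : S.PosDef) (hSS' : S ≤ S')
    (y : κ → ℝ) : y ⬝ᵥ S'⁻¹ *ᵥ y ≤ y ⬝ᵥ S⁻¹ *ᵥ y := by
  have hS' : S'.PosDef := by simpa using hS.add_posSemidef hSS'
  set v := S'⁻¹ *ᵥ y
  have hle : v ⬝ᵥ S *ᵥ v ≤ v ⬝ᵥ S' *ᵥ v := by
    have := hSS'.dotProduct_mulVec_self_nonneg v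
    rwa [sub_mulVec, dotProduct_sub, sub_nonneg] at this
  have := hS.two_mul_dotProduct_sub_le y v
  rw [hS'.mulVec_inv_mulVec, dotProduct_comm v y] at hle
  linarith

lemma PosDef.dotProduct_inv_add_smul_vecMulVec {S : Matrix κ κ ℝ} (hS : S.PosDef) {t : ℝ}
    (ht : 0 ≤ t) (a : κ → ℝ) :
    a ⬝ᵥ (S + t • vecMulVec a a)⁻¹ *ᵥ a = (a ⬝ᵥ S⁻¹ *ᵥ a) / (1 + t * (a ⬝ᵥ S⁻¹ *ᵥ a)) := by
  set ℓ := a ⬝ᵥ S⁻¹ *ᵥ a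
  have hℓ : 0 < 1 + t * ℓ := by
    nlinarith [hS.inv.posSemidef.dotProduct_mulVec_self_nonneg a]
  have hS' : (S + t • vecMulVec a a).PosDef :=
    hS.add_posSemidef ((posSemidef_vecMulVec_self a).smul ht)
  have hsol : (S + t • vecMulVec a a) *ᵥ ((1 + t * ℓ)⁻¹ • S⁻¹ *ᵥ a) = a := by
    rw [mulVec_smul, add_mulVec, hS.mulVec_inv_mulVec, smul_mulVec, vecMulVec_mulVec]
    ext i
    simp only [Pi.smul_apply, Pi.add_apply, MulOpposite.smul_eq_mul_unop, MulOpposite.unop_op,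
      smul_eq_mul]
    field_simp
    ring
  have hsolve : (S + t • vecMulVec a a)⁻¹ *ᵥ a = (1 + t * ℓ)⁻¹ • S⁻¹ *ᵥ a := by
    simpa only [hsol] using hS'.inv_mulVec_mulVec ((1 + t * ℓ)⁻¹ • S⁻¹ *ᵥ a)
  rw [hsolve, dotProduct_smul, smul_eq_mul, inv_mul_eq_div]

end Quadratic

end Matrix

section Gram

variable {ι κ : Type*} [Fintype ι] [DecidableEq ι] [DecidableEq κ]

noncomputable def weightedGram (A : Matrix ι κ ℝ) (ε : ℝ) (d : ι → ℝ) : Matrix κ κ ℝ :=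
  Aᵀ * diagonal d * A + ε • 1

variable (A : Matrix ι κ ℝ) (ε : ℝ) {d d' : ι → ℝ}

lemma weightedGram_isHermitian : (weightedGram A ε d).IsHermitian := by
  simp [IsHermitian, weightedGram, conjTranspose_eq_transpose_of_trivial, Matrix.transpose_mul,
    Matrix.mul_assoc]

lemma weightedGram_eq_update_add (i : ι) : weightedGram A ε d
    = weightedGram A ε (Function.update d i 0) + d i • vecMulVec (A i) (A i) := by
  have hsplit : diagonal d = diagonal (Function.update d i 0) + diagonal (Pi.single i (d i)) := by
    rw [diagonal_add]
    congr 1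
    ext j
    by_cases h : j = i <;> simp [h]
  rw [weightedGram, weightedGram, hsplit, Matrix.mul_add, Matrix.add_mul, add_right_comm]
  congr 1
  ext p q
  simp [Matrix.mul_apply, Matrix.diagonal, vecMulVec, Pi.single_apply]
  ring

variable [Fintype κ] {ε}

lemma weightedGram_posDef (hε : 0 < ε) (hd : 0 ≤ d) : (weightedGram A ε d).PosDef :=
  PosDef.posSemidef_add (posSemidef_transpose_mul_diagonal_mul A hd) (PosDef.one.smul hε)

lemma weightedGram_mono (hdd' : d ≤ d') : weightedGram A ε d ≤ weightedGram A ε d' := by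
  rw [le_iff, weightedGram, weightedGram, add_sub_add_right_eq_sub, ← Matrix.sub_mul,
    ← Matrix.mul_sub, diagonal_sub]
  exact posSemidef_transpose_mul_diagonal_mul A (sub_nonneg.2 hdd')

lemma dotProduct_weightedGram_mulVec (v : κ → ℝ) :
    v ⬝ᵥ weightedGram A ε d *ᵥ v = (A *ᵥ v) ⬝ᵥ diagonal d *ᵥ (A *ᵥ v) + ε * (v ⬝ᵥ v) := by
  rw [weightedGram, add_mulVec, dotProduct_add, ← mulVec_mulVec, ← mulVec_mulVec,
    dotProduct_transpose_mulVec, dotProduct_comm, smul_mulVec, one_mulVec, dotProduct_smul,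
    smul_eq_mul]

end Gram

section Covariance

variable {ι κ : Type*} [Fintype ι] [DecidableEq ι] [Fintype κ] [DecidableEq κ]

noncomputable def covariance (A : Matrix ι κ ℝ) (ε : ℝ) (d : ι → ℝ) : Matrix ι ι ℝ :=
  diagonal d - diagonal d * A * (weightedGram A ε d)⁻¹ * Aᵀ * diagonal d

variable (A : Matrix ι κ ℝ) {ε : ℝ} {d : ι → ℝ}

lemma dotProduct_covariance_mulVec (x : ι → ℝ) :
    x ⬝ᵥ covariance A ε d *ᵥ x = x ⬝ᵥ diagonal d *ᵥ x
      - (Aᵀ *ᵥ (diagonal d *ᵥ x)) ⬝ᵥ (weightedGram A ε d)⁻¹ *ᵥ (Aᵀ *ᵥ (diagonal d *ᵥ x)) := by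
  rw [covariance, sub_mulVec, dotProduct_sub]
  congr 1
  simp only [← mulVec_mulVec]
  rw [(isHermitian_diagonal d).dotProduct_mulVec_comm x, dotProduct_comm,
    ← dotProduct_transpose_mulVec, dotProduct_comm]

lemma covariance_quad_add (hε : 0 < ε) (hd : 0 ≤ d) (x : ι → ℝ) (v : κ → ℝ) :
    x ⬝ᵥ covariance A ε d *ᵥ x
      + (v - (weightedGram A ε d)⁻¹ *ᵥ (Aᵀ *ᵥ (diagonal d *ᵥ x))) ⬝ᵥ weightedGram A ε d *ᵥ
        (v - (weightedGram A ε d)⁻¹ *ᵥ (Aᵀ *ᵥ (diagonal d *ᵥ x)))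
      = (x - A *ᵥ v) ⬝ᵥ diagonal d *ᵥ (x - A *ᵥ v) + ε * (v ⬝ᵥ v) := by
  have hcross : (Aᵀ *ᵥ (diagonal d *ᵥ x)) ⬝ᵥ v = x ⬝ᵥ diagonal d *ᵥ (A *ᵥ v) := by
    rw [dotProduct_comm, dotProduct_transpose_mulVec, dotProduct_comm,
      (isHermitian_diagonal d).dotProduct_mulVec_comm]
  rw [(weightedGram_posDef A hε hd).dotProduct_mulVec_sub_inv_mulVec, dotProduct_covariance_mulVec,
    dotProduct_weightedGram_mulVec, (isHermitian_diagonal d).dotProduct_sub_mulVec_sub, hcross]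
  ring

lemma covariance_quad_le (hε : 0 < ε) (hd : 0 ≤ d) (x : ι → ℝ) (v : κ → ℝ) :
    x ⬝ᵥ covariance A ε d *ᵥ x ≤ (x - A *ᵥ v) ⬝ᵥ diagonal d *ᵥ (x - A *ᵥ v) + ε * (v ⬝ᵥ v) := by
  rw [← covariance_quad_add A hε hd x v, le_add_iff_nonneg_right]
  exact (weightedGram_posDef A hε hd).posSemidef.dotProduct_mulVec_self_nonneg _

lemma covariance_isHermitian : (covariance A ε d).IsHermitian := by
  have h := isHermitian_mul_mul_conjTranspose (diagonal d * A)
    (weightedGram_isHermitian A ε (d := d)).inv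
  refine (isHermitian_diagonal d).sub ?_
  simpa [conjTranspose_eq_transpose_of_trivial, Matrix.transpose_mul, Matrix.mul_assoc] using h

lemma covariance_posSemidef (hε : 0 < ε) (hd : 0 ≤ d) : (covariance A ε d).PosSemidef := by
  refine .of_dotProduct_mulVec_nonneg (covariance_isHermitian A) fun x => ?_
  have h := covariance_quad_add A hε hd x ((weightedGram A ε d)⁻¹ *ᵥ (Aᵀ *ᵥ (diagonal d *ᵥ x)))
  rw [sub_self, zero_dotProduct, add_zero] at h
  rw [star_trivial, h]
  exact add_nonneg ((PosSemidef.diagonal hd).dotProduct_mulVec_self_nonneg _)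
    (mul_nonneg hε.le (Finset.sum_nonneg fun i _ => mul_self_nonneg _))

lemma covariance_le_diagonal (hε : 0 < ε) (hd : 0 ≤ d) : covariance A ε d ≤ diagonal d := by
  refine .of_dotProduct_mulVec_nonneg ((isHermitian_diagonal d).sub (covariance_isHermitian A))
    fun x => ?_
  have := covariance_quad_le A hε hd x 0
  rw [star_trivial, sub_mulVec, dotProduct_sub, sub_nonneg]
  simpa using this

lemma dotProduct_covariance_mulVec_mulVec_le (hε : 0 < ε) (hd : 0 ≤ d) (v : κ → ℝ) :
    (A *ᵥ v) ⬝ᵥ covariance A ε d *ᵥ (A *ᵥ v) ≤ ε * (v ⬝ᵥ v) := by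
  simpa using covariance_quad_le A hε hd (A *ᵥ v) v

end Covariance

section Leverage

variable {ι κ : Type*} [Fintype ι] [DecidableEq ι] [Fintype κ] [DecidableEq κ]

noncomputable def leverage (A : Matrix ι κ ℝ) (ε : ℝ) (d : ι → ℝ) (i : ι) : ℝ :=
  d i * (A i ⬝ᵥ (weightedGram A ε d)⁻¹ *ᵥ A i)

noncomputable def leaveOneOutLeverage (A : Matrix ι κ ℝ) (ε : ℝ) (d : ι → ℝ) (i : ι) : ℝ :=
  A i ⬝ᵥ (weightedGram A ε (Function.update d i 0))⁻¹ *ᵥ A i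

variable (A : Matrix ι κ ℝ) {ε : ℝ} {d d' : ι → ℝ}

lemma covariance_apply_self (i : ι) : covariance A ε d i i = d i * (1 - leverage A ε d i) := by
  have h : diagonal d * A * (weightedGram A ε d)⁻¹ * Aᵀ * diagonal d
      = diagonal d * (A * (weightedGram A ε d)⁻¹ * Aᵀ) * diagonal d := by
    simp only [Matrix.mul_assoc]
  rw [covariance, Matrix.sub_apply, h, mul_diagonal, diagonal_mul, mul_mul_transpose_apply_self,
    diagonal_apply_eq, leverage]
  ring

lemma sum_leverage_le (hε : 0 < ε) (hd : 0 ≤ d) : ∑ i, leverage A ε d i ≤ Fintype.card κ := by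
  have hS := weightedGram_posDef A hε hd
  set T := (weightedGram A ε d)⁻¹
  have htr : ∑ i, leverage A ε d i = (Fintype.card κ : ℝ) - ε * T.trace :=
    calc ∑ i, leverage A ε d i = (diagonal d * (A * T * Aᵀ)).trace := by
          simp only [trace, diag, diagonal_mul, mul_mul_transpose_apply_self, leverage, T]
      _ = (T * (weightedGram A ε d - ε • 1)).trace := by
          rw [weightedGram, add_sub_cancel_right, ← Matrix.mul_assoc, ← Matrix.mul_assoc,
            trace_mul_comm, ← Matrix.mul_assoc, ← Matrix.mul_assoc, trace_mul_comm]
      _ = _ := by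
          rw [Matrix.mul_sub, nonsing_inv_mul _ ((isUnit_iff_isUnit_det _).1 hS.isUnit),
            Matrix.mul_smul, Matrix.mul_one, trace_sub, trace_smul, trace_one, smul_eq_mul]
  rw [htr, sub_le_self_iff]
  exact mul_nonneg hε.le hS.inv.posSemidef.trace_nonneg

lemma leverage_nonneg (hε : 0 < ε) (hd : 0 ≤ d) (i : ι) : 0 ≤ leverage A ε d i :=
  mul_nonneg (hd i) ((weightedGram_posDef A hε hd).inv.posSemidef.dotProduct_mulVec_self_nonneg _)

lemma leaveOneOutLeverage_nonneg (hε : 0 < ε) (hd : 0 ≤ d) (i : ι) :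
    0 ≤ leaveOneOutLeverage A ε d i :=
  (weightedGram_posDef A hε (Function.update_zero_nonneg hd i)).inv.posSemidef
    |>.dotProduct_mulVec_self_nonneg _

lemma leaveOneOutLeverage_antitone (hε : 0 < ε) (hd : 0 ≤ d) (hdd' : d ≤ d') (i : ι) :
    leaveOneOutLeverage A ε d' i ≤ leaveOneOutLeverage A ε d i :=
  (weightedGram_posDef A hε (Function.update_zero_nonneg hd i)).dotProduct_inv_mulVec_antitone
    (weightedGram_mono A (update_le_update_iff.2 ⟨le_rfl, fun j _ => hdd' j⟩)) _

lemma leverage_eq (hε : 0 < ε) (hd : 0 ≤ d) (i : ι) : leverage A ε d i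
    = d i * leaveOneOutLeverage A ε d i / (1 + d i * leaveOneOutLeverage A ε d i) := by
  have hS := weightedGram_posDef A hε (Function.update_zero_nonneg hd i)
  rw [leverage, weightedGram_eq_update_add A ε i, hS.dotProduct_inv_add_smul_vecMulVec (hd i),
    leaveOneOutLeverage, mul_div_assoc]

end Leverage

section Reweighting

variable {ι κ : Type*} [Fintype ι] [DecidableEq ι] [Fintype κ] [DecidableEq κ]

noncomputable def reweight (A : Matrix ι κ ℝ) (ε η : ℝ) (d : ι → ℝ) : ι → ℝ :=
  fun i => (η - 1) / max (leaveOneOutLeverage A ε d i) (η - 1)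

variable (A : Matrix ι κ ℝ) {ε η : ℝ} {d : ι → ℝ}

lemma reweight_mapsTo (hη : 1 < η) :
    Set.MapsTo (reweight A ε η) (Set.Icc 0 1) (Set.Icc 0 1) := fun _ _ =>
  ⟨fun _ => div_nonneg (sub_nonneg.2 hη.le) (le_max_of_le_right (sub_nonneg.2 hη.le)),
    fun _ => div_le_one_of_le₀ (le_max_right _ _) (le_max_of_le_right (sub_nonneg.2 hη.le))⟩

lemma reweight_monotoneOn (hε : 0 < ε) (hη : 1 < η) :
    MonotoneOn (reweight A ε η) (Set.Icc 0 1) := fun _ hd _ _ hdd' i =>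
  div_le_div_of_nonneg_left (sub_nonneg.2 hη.le) (lt_max_of_lt_right (sub_pos.2 hη))
    (max_le_max (leaveOneOutLeverage_antitone A hε hd.1 hdd' i) le_rfl)

lemma exists_reweight_eq_self (hε : 0 < ε) (hη : 1 < η) :
    ∃ d ∈ Set.Icc 0 1, reweight A ε η d = d :=
  exists_fixedPoint_of_monotoneOn_Icc zero_le_one (reweight_monotoneOn A hε hη)
    (reweight_mapsTo A hη)

lemma leverage_le_and_eq_of_reweight_eq (hε : 0 < ε) (hη : 1 < η) (hd : 0 ≤ d)
    (hfix : reweight A ε η d = d) (i : ι) :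
    leverage A ε d i ≤ 1 - η⁻¹ ∧ (d i < 1 → leverage A ε d i = 1 - η⁻¹) := by
  set L := leaveOneOutLeverage A ε d i
  have hL : 0 ≤ L := leaveOneOutLeverage_nonneg A hε hd i
  have hdi : d i = (η - 1) / max L (η - 1) := (congrFun hfix i).symm
  have ht : d i * L ≤ η - 1 ∧ (d i < 1 → d i * L = η - 1) := by
    rcases le_total L (η - 1) with h | h
    · rw [hdi, max_eq_right h, div_self (sub_pos.2 hη).ne']
      exact ⟨by linarith, fun h1 => absurd h1 (lt_irrefl 1)⟩
    · rw [hdi, max_eq_left h, div_mul_cancel₀ _ (by linarith)]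
      exact ⟨le_rfl, fun _ => rfl⟩
  have ht0 : 0 ≤ d i * L := mul_nonneg (hd i) hL
  have hη' : 1 - η⁻¹ = (η - 1) / (1 + (η - 1)) := by
    rw [add_sub_cancel, sub_div, div_self (by positivity), one_div]
  rw [leverage_eq A hε hd i, hη']
  refine ⟨?_, fun h => by rw [ht.2 h]⟩
  rw [div_le_div_iff₀ (by linarith) (by linarith)]
  nlinarith [ht.1]

end Reweighting

section Subisotropic

variable {ι κ : Type*} [Fintype ι] [DecidableEq ι]

def subisotropicCovariances (η c : ℝ) : Set (Matrix ι ι ℝ) :=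
  {U | U.PosSemidef ∧ (∀ i, U i i ≤ 1) ∧ c ≤ U.trace ∧
    (η • diagonal (fun i => U i i) - U).PosSemidef}

lemma isCompact_subisotropicCovariances (η c : ℝ) :
    IsCompact (subisotropicCovariances η c : Set (Matrix ι ι ℝ)) := by
  have hK : subisotropicCovariances η c = {U : Matrix ι ι ℝ | U.PosSemidef} ∩
      ((⋂ i, {U | U i i ≤ 1}) ∩ ({U | c ≤ U.trace} ∩
        (fun U => η • diagonal (fun i => U i i) - U) ⁻¹' {M | M.PosSemidef})) := by
    ext U
    simp [subisotropicCovariances]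
  refine .of_isClosed_subset (isCompact_univ_pi fun _ => isCompact_univ_pi fun _ =>
    isCompact_Icc (a := (-1 : ℝ)) (b := 1)) ?_ fun U hU i _ j _ => ?_
  · rw [hK]
    exact isClosed_setOf_posSemidef.inter
      ((isClosed_iInter fun i => isClosed_le (by fun_prop) continuous_const).inter
        ((isClosed_le continuous_const (by fun_prop)).inter
          (isClosed_setOf_posSemidef.preimage (by fun_prop))))
  · have := hU.1.two_mul_abs_apply_le i j
    exact abs_le.1 (by linarith [hU.2.1 i, hU.2.1 j])

variable [Fintype κ] [DecidableEq κ] (A : Matrix ι κ ℝ) {ε η : ℝ}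

theorem exists_mem_subisotropicCovariances_quad_le (hε : 0 < ε) (hη : 1 < η) :
    ∃ U ∈ subisotropicCovariances η (Fintype.card ι - Fintype.card κ / (1 - η⁻¹)),
      ∀ v, (A *ᵥ v) ⬝ᵥ U *ᵥ (A *ᵥ v) ≤ ε * (v ⬝ᵥ v) := by
  obtain ⟨d, ⟨hd0, hd1⟩, hfix⟩ := exists_reweight_eq_self A hε hη
  have hQ := leverage_le_and_eq_of_reweight_eq A hε hη hd0 hfix
  have hQ0 := leverage_nonneg A hε hd0
  have hUii := covariance_apply_self A (ε := ε) (d := d)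
  have hlam : 0 < 1 - η⁻¹ ∧ 1 - η⁻¹ ≤ 1 :=
    ⟨sub_pos.2 (inv_lt_one_of_one_lt₀ hη), sub_le_self _ (by positivity)⟩
  set lam := 1 - η⁻¹
  set U := covariance A ε d
  refine ⟨U, ⟨covariance_posSemidef A hε hd0, fun i => ?_, ?_, ?_⟩,
    dotProduct_covariance_mulVec_mulVec_le A hε hd0⟩
  · rw [hUii]
    exact mul_le_one₀ (hd1 i) (by linarith [(hQ i).1]) (sub_le_self _ (hQ0 i))
  · have hdiag : ∀ i, 1 - leverage A ε d i / lam ≤ U i i := by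
      intro i
      rw [hUii]
      rcases (hd1 i).lt_or_eq with h | h
      · rw [(hQ i).2 h, div_self hlam.1.ne', sub_self]
        exact mul_nonneg (hd0 i) (sub_nonneg.2 hlam.2)
      · rw [h, Pi.one_apply, one_mul]
        exact sub_le_sub_left (le_div_self (hQ0 i) hlam.1 hlam.2) 1
    calc (Fintype.card ι : ℝ) - Fintype.card κ / lam
        ≤ ∑ i, (1 - leverage A ε d i / lam) := by
          rw [Finset.sum_sub_distrib, ← Finset.sum_div, Finset.sum_const, Finset.card_univ,
            nsmul_one]
          exact sub_le_sub_left (div_le_div_of_nonneg_right (sum_leverage_le A hε hd0) hlam.1.le) _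
      _ ≤ U.trace := Finset.sum_le_sum fun i _ => hdiag i
  · refine le_iff.1 ((covariance_le_diagonal A hε hd0).trans (le_iff.2 ?_))
    rw [← diagonal_smul, diagonal_sub, posSemidef_diagonal_iff]
    intro i
    have h1 : 1 ≤ η * (1 - leverage A ε d i) :=
      calc 1 = η * (1 - lam) := by simp [lam, (zero_lt_one.trans hη).ne']
        _ ≤ η * (1 - leverage A ε d i) := by gcongr; exact (hQ i).1
    simp only [Pi.smul_apply, smul_eq_mul, hUii]
    nlinarith [mul_le_mul_of_nonneg_left h1 (hd0 i)]

theorem exists_mem_subisotropicCovariances_transpose_mul_mul_eq_zero (hη : 1 < η) :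
    ∃ U : Matrix ι ι ℝ, U ∈ subisotropicCovariances η (Fintype.card ι - Fintype.card κ / (1 - η⁻¹))
      ∧ Aᵀ * U * A = 0 := by
  obtain ⟨U, hU, htr⟩ := (isCompact_subisotropicCovariances _ _).exists_le_of_forall_exists_le_add
    (f := fun U : Matrix ι ι ℝ => (Aᵀ * U * A).trace) (by fun_prop) fun ε hε => by
      have hε' : 0 < ε / (Fintype.card κ + 1) := by positivity
      obtain ⟨U, hU, hquad⟩ := exists_mem_subisotropicCovariances_quad_le A hε' hη
      refine ⟨U, hU, (trace_transpose_mul_mul_le A hquad).trans ?_⟩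
      rw [zero_add, div_mul_eq_mul_div, div_le_iff₀ (by positivity)]
      nlinarith
  have hpsd : (Aᵀ * U * A).PosSemidef := by
    simpa [conjTranspose_eq_transpose_of_trivial] using hU.1.conjTranspose_mul_mul_same A
  exact ⟨U, hU, hpsd.trace_eq_zero_iff.1 (le_antisymm htr hpsd.trace_nonneg)⟩

end Subisotropic

lemma Submodule.exists_matrix_forall_mem_exists_mulVec_eq {K ι : Type*} [Field K] [Fintype ι]
    (W : Submodule K (ι → K)) :
    ∃ A : Matrix ι (Fin (Module.finrank K W)) K, ∀ w ∈ W, ∃ v, A *ᵥ v = w := by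
  let b := Module.finBasis K W
  refine ⟨LinearMap.toMatrix' (W.subtype ∘ₗ b.equivFun.symm.toLinearMap), fun w hw =>
    ⟨b.equivFun ⟨w, hw⟩, ?_⟩⟩
  simp

theorem exists_subisotropic_covariance_general (n : ℕ) (W : Submodule ℝ (Fin n → ℝ))
    (δ : ℝ) (hdim : (Module.finrank ℝ W : ℝ) ≤ (1 - δ) * n)
    (a η : ℝ) (ha : 0 < a) (hη : 1 < η) (hcond : 1 / η + a ≤ δ) :
    ∃ U : Matrix (Fin n) (Fin n) ℝ, U.PosSemidef ∧
      (∀ w ∈ W, w ⬝ᵥ (U *ᵥ w) = 0) ∧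
      (∀ i, U i i ≤ 1) ∧
      a * n ≤ U.trace ∧
      (η • Matrix.diagonal (fun i => U i i) - U).PosSemidef := by
  obtain ⟨A, hA⟩ := W.exists_matrix_forall_mem_exists_mulVec_eq
  obtain ⟨U, ⟨hpsd, hdiag, htr, hsub⟩, hAUA⟩ :=
    exists_mem_subisotropicCovariances_transpose_mul_mul_eq_zero A hη
  refine ⟨U, hpsd, fun w hw => ?_, hdiag, le_trans ?_ htr, hsub⟩
  · obtain ⟨v, rfl⟩ := hA w hw
    rw [dotProduct_mulVec_mulVec, hAUA, zero_mulVec, dotProduct_zero]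
  · have hlam : 0 < 1 - η⁻¹ := sub_pos.2 (inv_lt_one_of_one_lt₀ hη)
    have hk : (Module.finrank ℝ W : ℝ) ≤ (1 - η⁻¹ - a) * n :=
      hdim.trans (mul_le_mul_of_nonneg_right (by rw [one_div] at hcond; linarith) n.cast_nonneg)
    rw [Fintype.card_fin, Fintype.card_fin, le_sub_iff_add_le, ← le_sub_iff_add_le',
      div_le_iff₀ hlam]
    nlinarith [mul_nonneg (mul_nonneg ha.le n.cast_nonneg) (inv_nonneg.2 (zero_le_one.trans hη.le))]

/-- **Existence of sub-isotropic covariance matrices (Theorem 2.4, Bansal–Garg).**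
If `W ⊆ ℝⁿ` is a subspace with `dim(W) ≤ (1−δ)n`, `δ > 0`, and `a > 0`, `η > 1`
satisfy `1/η + a ≤ δ`, then there is a symmetric PSD matrix `U` with `wᵀUw = 0` for
all `w ∈ W`, `U_{ii} ≤ 1`, `Tr(U) ≥ a·n`, and `η·diag(U) − U ⪰ 0`. -/
theorem exists_subisotropic_covariance (n : ℕ) (W : Submodule ℝ (Fin n → ℝ))
    (δ : ℝ) (hδ : 0 < δ) (hdim : (Module.finrank ℝ W : ℝ) ≤ (1 - δ) * n)
    (a η : ℝ) (ha : 0 < a) (hη : 1 < η) (hcond : 1 / η + a ≤ δ) :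
    ∃ U : Matrix (Fin n) (Fin n) ℝ, U.PosSemidef ∧
      (∀ w ∈ W, w ⬝ᵥ (U *ᵥ w) = 0) ∧
      (∀ i, U i i ≤ 1) ∧
      a * n ≤ U.trace ∧
      (η • Matrix.diagonal (fun i => U i i) - U).PosSemidef :=
  exists_subisotropic_covariance_general n W δ hdim a η ha hη hcond
end

section
/- Let U be a real symmetric positive semidefinite n×n matrix, and let r ∈ {−1,1}ⁿ be a random vector with independent coordinates each uniform on {−1,1}. Define Y = U^{1/2} r, where U^{1/2} is the positive semidefinite square root of U. Then E[Y_i] = 0 for all i, E[Y_i Y_j] = U_{ij} for all i,j (so E[Y_i²] = U_{ii}), and, if moreover η·diag(U) − U is positive semidefinite for some η ≥ 1, then for every c ∈ ℝⁿ one has E[(Σ_i c_i Y_i)²] ≤ η · Σ_i c_i² · E[Y_i²]. -/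
/-!
With `S = U^{1/2}` we have `Y = S r`, so every linear functional of `Y` is a linear functional of
the sign vector: `c ⬝ᵥ Y = (c ᵥ* S) ⬝ᵥ r`. The signs are independent, centred and of unit
variance, hence `E[(a ⬝ᵥ r) (b ⬝ᵥ r)] = a ⬝ᵥ b`. This gives `E[Y_i Y_j] = (S Sᵀ)_{ij} = U_{ij}` and
`E[(c ⬝ᵥ Y)²] = c ⬝ᵥ U *ᵥ c`, which `η • diag U - U ⪰ 0` bounds by `η ∑ c_i² U_{ii}`.
-/

open MeasureTheory Matrix

noncomputable def uniformSign : Measure ℝ :=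
  (2 : ENNReal)⁻¹ • Measure.dirac (-1 : ℝ) + (2 : ENNReal)⁻¹ • Measure.dirac (1 : ℝ)

open scoped ComplexOrder in
/-- The positive semidefinite square root, as `Matrix.PosSemidef.sqrt` was defined in Mathlib
(December 2024); that declaration has since been removed. -/
noncomputable def Matrix.PosSemidef.sqrt {n 𝕜 : Type*} [Fintype n] [RCLike 𝕜] [DecidableEq n]
    {A : Matrix n n 𝕜} (hA : A.PosSemidef) : Matrix n n 𝕜 :=
  hA.1.eigenvectorUnitary.1 * diagonal ((↑) ∘ (Real.sqrt ·) ∘ hA.1.eigenvalues) *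
  (star hA.1.eigenvectorUnitary : Matrix n n 𝕜)

open scoped ComplexOrder in
theorem Matrix.PosSemidef.sqrt_mul_conjTranspose_sqrt {n 𝕜 : Type*} [Fintype n] [RCLike 𝕜]
    [DecidableEq n] {A : Matrix n n 𝕜} (hA : A.PosSemidef) : hA.sqrt * hA.sqrtᴴ = A := by
  set D : Matrix n n 𝕜 := diagonal ((↑) ∘ (Real.sqrt ·) ∘ hA.1.eigenvalues)
  have hD : D * star D = diagonal ((↑) ∘ hA.1.eigenvalues) := by
    rw [star_eq_conjTranspose, diagonal_conjTranspose, diagonal_mul_diagonal]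
    congr 1 with i
    simp [← RCLike.ofReal_mul, Real.mul_self_sqrt (hA.eigenvalues_nonneg i)]
  have hS : hA.sqrt = Unitary.conjStarAlgAut 𝕜 _ hA.1.eigenvectorUnitary D := rfl
  rw [← star_eq_conjTranspose, hS, ← map_star, ← map_mul, hD, ← hA.1.spectral_theorem]

theorem Matrix.PosSemidef.sqrt_mul_transpose_sqrt {n : Type*} [Fintype n] [DecidableEq n]
    {A : Matrix n n ℝ} (hA : A.PosSemidef) : hA.sqrt * hA.sqrtᵀ = A := by
  simpa using hA.sqrt_mul_conjTranspose_sqrt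

theorem dotProduct_mulVec_le_of_posSemidef_sub {ι : Type*} [Fintype ι]
    {A B : Matrix ι ι ℝ} (hAB : (B - A).PosSemidef) (v : ι → ℝ) :
    v ⬝ᵥ A *ᵥ v ≤ v ⬝ᵥ B *ᵥ v := by
  simpa [sub_mulVec] using hAB.dotProduct_mulVec_nonneg v

theorem dotProduct_smul_diagonal_mulVec {ι : Type*} [Fintype ι] [DecidableEq ι]
    (η : ℝ) (d v : ι → ℝ) : v ⬝ᵥ (η • diagonal d) *ᵥ v = η * ∑ i, v i ^ 2 * d i := by
  rw [smul_mulVec, dotProduct_smul, smul_eq_mul]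
  simp only [dotProduct, mulVec_diagonal]
  exact congrArg _ (Finset.sum_congr rfl fun i _ => by ring)

theorem vecMul_dotProduct_vecMul {ι κ : Type*} [Fintype ι] [Fintype κ] (A : Matrix ι κ ℝ)
    (v : ι → ℝ) : (v ᵥ* A) ⬝ᵥ (v ᵥ* A) = v ⬝ᵥ (A * Aᵀ) *ᵥ v := by
  rw [← mulVec_mulVec, dotProduct_mulVec, mulVec_transpose]

instance : IsProbabilityMeasure uniformSign := by
  constructor
  simp [uniformSign, ENNReal.inv_two_add_inv_two]

theorem integrable_uniformSign (g : ℝ → ℝ) : Integrable g uniformSign :=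
  ((integrable_dirac enorm_lt_top).smul_measure (by simp)).add_measure
    ((integrable_dirac enorm_lt_top).smul_measure (by simp))

theorem integral_uniformSign (g : ℝ → ℝ) :
    ∫ t, g t ∂uniformSign = (g (-1) + g 1) / 2 := by
  rw [uniformSign, integral_add_measure, integral_smul_measure, integral_smul_measure,
    integral_dirac, integral_dirac]
  · simp [ENNReal.toReal_inv]; ring
  all_goals exact (integrable_dirac enorm_lt_top).smul_measure (by simp)

theorem integral_comp_of_map_eq {Ω α : Type*} [MeasurableSpace Ω] [MeasurableSpace α]
    [TopologicalSpace α] [OpensMeasurableSpace α] {μ : Measure Ω} {ν : Measure α} {r : Ω → α}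
    (hrm : Measurable r) (hr : μ.map r = ν) {F : α → ℝ} (hF : Continuous F) :
    ∫ ω, F (r ω) ∂μ = ∫ x, F x ∂ν := by
  rw [← hr, integral_map hrm.aemeasurable hF.aestronglyMeasurable]

theorem integral_dotProduct_mul_dotProduct {Ω ι : Type*} [MeasurableSpace Ω] [Fintype ι]
    {μ : Measure Ω} {X : Ω → ι → ℝ} (hX : ∀ k l, Integrable (fun ω => X ω k * X ω l) μ)
    (a b : ι → ℝ) :
    ∫ ω, (a ⬝ᵥ X ω) * (b ⬝ᵥ X ω) ∂μ = ∑ k, ∑ l, a k * b l * ∫ ω, X ω k * X ω l ∂μ := by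
  have hexpand : ∀ ω, (a ⬝ᵥ X ω) * (b ⬝ᵥ X ω) = ∑ k, ∑ l, a k * b l * (X ω k * X ω l) := by
    intro ω
    simp only [dotProduct, Finset.sum_mul_sum]
    exact Finset.sum_congr rfl fun k _ => Finset.sum_congr rfl fun l _ => by ring
  simp_rw [hexpand]
  rw [integral_finsetSum _ fun k _ => integrable_finsetSum _ fun l _ => (hX k l).const_mul _]
  refine Finset.sum_congr rfl fun k _ => ?_
  rw [integral_finsetSum _ fun l _ => (hX k l).const_mul _]
  simp_rw [integral_const_mul]

noncomputable abbrev rademacher (ι : Type*) [Fintype ι] : Measure (ι → ℝ) :=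
  Measure.pi fun _ : ι => uniformSign

section Rademacher

variable {ι : Type*} [Fintype ι]

theorem integrable_comp_eval_rademacher (g : ℝ → ℝ) (k : ι) :
    Integrable (fun x => g (x k)) (rademacher ι) :=
  (measurePreserving_eval _ k).integrable_comp_of_integrable (integrable_uniformSign g)

theorem integral_comp_eval_rademacher (g : ℝ → ℝ) (k : ι) :
    ∫ x, g (x k) ∂rademacher ι = (g (-1) + g 1) / 2 := by
  have h := measurePreserving_eval (fun _ : ι => uniformSign) k
  rw [← integral_uniformSign, ← h.map_eq, integral_map h.measurable.aemeasurable]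
  rw [h.map_eq]
  exact (integrable_uniformSign g).aestronglyMeasurable

theorem indepFun_eval_rademacher {k l : ι} (hkl : k ≠ l) :
    ProbabilityTheory.IndepFun (fun x => x k) (fun x => x l) (rademacher ι) :=
  (ProbabilityTheory.iIndepFun_pi (X := fun _ t => t) fun _ => aemeasurable_id).indepFun hkl

theorem integrable_eval_rademacher (k : ι) : Integrable (fun x => x k) (rademacher ι) :=
  integrable_comp_eval_rademacher id k

theorem integral_eval_rademacher (k : ι) : ∫ x, x k ∂rademacher ι = 0 := by
  rw [integral_comp_eval_rademacher (fun t => t)]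
  norm_num

theorem integrable_eval_mul_eval_rademacher (k l : ι) :
    Integrable (fun x => x k * x l) (rademacher ι) := by
  by_cases hkl : k = l
  · subst hkl
    exact integrable_comp_eval_rademacher (fun t => t * t) k
  · exact (indepFun_eval_rademacher hkl).integrable_mul
      (integrable_eval_rademacher k) (integrable_eval_rademacher l)

theorem integral_eval_mul_eval_rademacher [DecidableEq ι] (k l : ι) :
    ∫ x, x k * x l ∂rademacher ι = if k = l then 1 else 0 := by
  by_cases hkl : k = l
  · subst hkl
    rw [integral_comp_eval_rademacher (fun t => t * t)]
    norm_num
  · rw [if_neg hkl, (indepFun_eval_rademacher hkl).integral_fun_mul_eq_mul_integral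
      (measurable_pi_apply k).aestronglyMeasurable (measurable_pi_apply l).aestronglyMeasurable,
      integral_eval_rademacher, zero_mul]

theorem integral_dotProduct_rademacher (a : ι → ℝ) : ∫ x, a ⬝ᵥ x ∂rademacher ι = 0 := by
  simp only [dotProduct]
  rw [integral_finsetSum _ fun k _ => (integrable_eval_rademacher k).const_mul _]
  simp [integral_const_mul, integral_eval_rademacher]

theorem integral_dotProduct_mul_dotProduct_rademacher (a b : ι → ℝ) :
    ∫ x, (a ⬝ᵥ x) * (b ⬝ᵥ x) ∂rademacher ι = a ⬝ᵥ b := by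
  classical
  rw [integral_dotProduct_mul_dotProduct (X := fun x => x) integrable_eval_mul_eval_rademacher]
  simp [integral_eval_mul_eval_rademacher, dotProduct]

end Rademacher

theorem subisotropic_construction_general {n : ℕ} (U : Matrix (Fin n) (Fin n) ℝ)
    (hU : U.PosSemidef) {Ω : Type*} [MeasurableSpace Ω] (μ : Measure Ω)
    (r : Ω → Fin n → ℝ) (hrm : Measurable r)
    (hr : Measure.map r μ = Measure.pi fun _ : Fin n => uniformSign)
    (Y : Ω → Fin n → ℝ) (hY : ∀ ω, Y ω = hU.sqrt *ᵥ r ω) :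
    (∀ i, ∫ ω, Y ω i ∂μ = 0) ∧
    (∀ i j, ∫ ω, Y ω i * Y ω j ∂μ = U i j) ∧
    (∀ η : ℝ, 1 ≤ η → (η • Matrix.diagonal (fun i => U i i) - U).PosSemidef →
      ∀ c : Fin n → ℝ,
        ∫ ω, (∑ i, c i * Y ω i) ^ 2 ∂μ ≤ η * ∑ i, (c i) ^ 2 * ∫ ω, (Y ω i) ^ 2 ∂μ) := by
  set S := hU.sqrt
  have hYr : ∀ ω i, Y ω i = S i ⬝ᵥ r ω := fun ω i => by rw [hY]; rfl
  have second_moment : ∀ i j, ∫ ω, Y ω i * Y ω j ∂μ = U i j := fun i j => by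
    simp_rw [hYr]
    rw [integral_comp_of_map_eq hrm hr (F := fun x => (S i ⬝ᵥ x) * (S j ⬝ᵥ x)) (by fun_prop),
      integral_dotProduct_mul_dotProduct_rademacher, ← hU.sqrt_mul_transpose_sqrt, mul_apply']
    rfl
  refine ⟨fun i => ?_, second_moment, fun η _ hη c => ?_⟩
  · simp_rw [hYr]
    rw [integral_comp_of_map_eq hrm hr (F := fun x => S i ⬝ᵥ x) (by fun_prop),
      integral_dotProduct_rademacher]
  · have hcY : ∀ ω, ∑ i, c i * Y ω i = (c ᵥ* S) ⬝ᵥ r ω := fun ω => by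
      rw [← dotProduct_mulVec, ← hY]; rfl
    calc ∫ ω, (∑ i, c i * Y ω i) ^ 2 ∂μ = (c ᵥ* S) ⬝ᵥ (c ᵥ* S) := by
          simp_rw [hcY, pow_two]
          rw [integral_comp_of_map_eq hrm hr (F := fun x => ((c ᵥ* S) ⬝ᵥ x) * ((c ᵥ* S) ⬝ᵥ x))
            (by fun_prop), integral_dotProduct_mul_dotProduct_rademacher]
      _ = c ⬝ᵥ U *ᵥ c := by rw [vecMul_dotProduct_vecMul, hU.sqrt_mul_transpose_sqrt]
      _ ≤ c ⬝ᵥ (η • diagonal fun i => U i i) *ᵥ c := dotProduct_mulVec_le_of_posSemidef_sub hη c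
      _ = η * ∑ i, c i ^ 2 * ∫ ω, Y ω i ^ 2 ∂μ := by
          simp_rw [dotProduct_smul_diagonal_mulVec, pow_two, second_moment]

/-- **Generic construction of sub-isotropic random vectors.**
Let `U` be a real symmetric PSD `n×n` matrix and `r` a random vector with independent
coordinates uniform on `{−1,1}` (i.e. distributed as the product of uniform sign measures).
Let `Y = U^{1/2} r`. Then `E[Y_i] = 0`, `E[Y_i Y_j] = U_{ij}`, and if moreover
`η·diag(U) − U ⪰ 0` for some `η ≥ 1`, then `E[(Σ_i c_i Y_i)²] ≤ η·Σ_i c_i²·E[Y_i²]`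
for every `c ∈ ℝⁿ`. -/
theorem subisotropic_construction {n : ℕ} (U : Matrix (Fin n) (Fin n) ℝ)
    (hU : U.PosSemidef) {Ω : Type*} [MeasurableSpace Ω] (μ : Measure Ω)
    [IsProbabilityMeasure μ] (r : Ω → Fin n → ℝ) (hrm : Measurable r)
    (hr : Measure.map r μ = Measure.pi fun _ : Fin n => uniformSign)
    (Y : Ω → Fin n → ℝ) (hY : ∀ ω, Y ω = hU.sqrt *ᵥ r ω) :
    (∀ i, ∫ ω, Y ω i ∂μ = 0) ∧
    (∀ i j, ∫ ω, Y ω i * Y ω j ∂μ = U i j) ∧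
    (∀ η : ℝ, 1 ≤ η → (η • Matrix.diagonal (fun i => U i i) - U).PosSemidef →
      ∀ c : Fin n → ℝ,
        ∫ ω, (∑ i, c i * Y ω i) ^ 2 ∂μ ≤ η * ∑ i, (c i) ^ 2 * ∫ ω, (Y ω i) ^ 2 ∂μ) :=
  subisotropic_construction_general U hU μ r hrm hr Y hY
end

section
/- Let n ≥ 1, let a ∈ ℝⁿ with |a_i| ≤ 1 for all i, let 0 < λ ≤ 1, and let x, y ∈ ℝⁿ satisfy x ∈ [0,1]ⁿ, x + y ∈ [0,1]ⁿ, and ‖y‖₂ ≤ (1/2)·n^{−1/2}. Then the quantity Y := Σ_i a_i y_i + λ·Σ_i a_i²·y_i·(1 − 2x_i − y_i) satisfies |Y| ≤ 1. -/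
/-- **Deterministic increment bound (Claim 4.1).**
Let `n ≥ 1`, `|a_i| ≤ 1`, `0 < λ ≤ 1`, and `x, x+y ∈ [0,1]ⁿ` with
`‖y‖₂ ≤ (1/2)·n^{−1/2}`. Then the increment
`Y = Σ_i a_i y_i + λ·Σ_i a_i²·y_i·(1 - 2x_i - y_i)` satisfies `|Y| ≤ 1`. -/
theorem increment_abs_le_one {n : ℕ} (hn : 1 ≤ n) (a x y : Fin n → ℝ)
    (ha : ∀ i, |a i| ≤ 1) (lam : ℝ) (hlam0 : 0 < lam) (hlam1 : lam ≤ 1)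
    (hx : ∀ i, x i ∈ Set.Icc (0 : ℝ) 1) (hxy : ∀ i, x i + y i ∈ Set.Icc (0 : ℝ) 1)
    (hynorm : Real.sqrt (∑ i, (y i) ^ 2) ≤ (1 / 2) * (n : ℝ) ^ (-(1/2) : ℝ)) :
    |∑ i, a i * y i + lam * ∑ i, (a i) ^ 2 * y i * (1 - 2 * x i - y i)| ≤ 1 := by
  have hn0 : (0 : ℝ) < n := by exact_mod_cast hn
  -- Cauchy–Schwarz: Σ |y i| ≤ 1/2
  have hcs : (∑ i, |y i|) ^ 2 ≤ (n : ℝ) * ∑ i, (y i) ^ 2 := by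
    have := sq_sum_le_card_mul_sum_sq (s := Finset.univ) (f := fun i => |y i|)
    simpa [sq_abs] using this
  have hpow : Real.sqrt n * (n : ℝ) ^ (-(1/2) : ℝ) = 1 := by
    rw [Real.sqrt_eq_rpow, ← Real.rpow_add hn0]
    norm_num
  have hsum : (∑ i, |y i|) ≤ 1 / 2 := by
    have h1 : (∑ i, |y i|) = Real.sqrt ((∑ i, |y i|) ^ 2) := by
      rw [Real.sqrt_sq (by positivity)]
    rw [h1]
    calc Real.sqrt ((∑ i, |y i|) ^ 2) ≤ Real.sqrt ((n : ℝ) * ∑ i, (y i) ^ 2) :=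
          Real.sqrt_le_sqrt hcs
      _ = Real.sqrt n * Real.sqrt (∑ i, (y i) ^ 2) := Real.sqrt_mul hn0.le _
      _ ≤ Real.sqrt n * ((1 / 2) * (n : ℝ) ^ (-(1/2) : ℝ)) :=
          mul_le_mul_of_nonneg_left hynorm (Real.sqrt_nonneg _)
      _ = 1 / 2 := by rw [show Real.sqrt n * ((1/2) * (n : ℝ) ^ (-(1/2) : ℝ))
            = (1/2) * (Real.sqrt n * (n : ℝ) ^ (-(1/2) : ℝ)) by ring, hpow]; norm_num
  -- termwise bounds
  have hA : |∑ i, a i * y i| ≤ ∑ i, |y i| := by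
    calc |∑ i, a i * y i| ≤ ∑ i, |a i * y i| := Finset.abs_sum_le_sum_abs _ _
      _ ≤ ∑ i, |y i| := by
        apply Finset.sum_le_sum
        intro i _
        rw [abs_mul]
        exact mul_le_of_le_one_left (abs_nonneg _) (ha i)
  have hB : |∑ i, (a i) ^ 2 * y i * (1 - 2 * x i - y i)| ≤ ∑ i, |y i| := by
    calc |∑ i, (a i) ^ 2 * y i * (1 - 2 * x i - y i)|
        ≤ ∑ i, |(a i) ^ 2 * y i * (1 - 2 * x i - y i)| := Finset.abs_sum_le_sum_abs _ _
      _ ≤ ∑ i, |y i| := by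
        apply Finset.sum_le_sum
        intro i _
        have h1 : |(a i) ^ 2| ≤ 1 := by
          rw [abs_pow]
          exact pow_le_one₀ (abs_nonneg _) (ha i)
        have h2 : |1 - 2 * x i - y i| ≤ 1 := by
          have hx1 := (hx i).1; have hx2 := (hx i).2
          have hxy1 := (hxy i).1; have hxy2 := (hxy i).2
          rw [abs_le]; constructor <;> linarith
        calc |(a i) ^ 2 * y i * (1 - 2 * x i - y i)|
            = |(a i) ^ 2| * |y i| * |1 - 2 * x i - y i| := by rw [abs_mul, abs_mul]
          _ ≤ 1 * |y i| * 1 := by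
              apply mul_le_mul _ h2 (abs_nonneg _) (by positivity)
              exact mul_le_mul_of_nonneg_right h1 (abs_nonneg _)
          _ = |y i| := by ring
  calc |∑ i, a i * y i + lam * ∑ i, (a i) ^ 2 * y i * (1 - 2 * x i - y i)|
      ≤ |∑ i, a i * y i| + |lam * ∑ i, (a i) ^ 2 * y i * (1 - 2 * x i - y i)| :=
        abs_add_le _ _
    _ ≤ (∑ i, |y i|) + 1 * (∑ i, |y i|) := by
        rw [abs_mul, abs_of_pos hlam0]
        exact add_le_add hA (mul_le_mul hlam1 hB (abs_nonneg _) zero_le_one)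
    _ ≤ 1 := by linarith
end

section
/- Let n ≥ 1, η ≥ 1, 0 < λ ≤ 1, let a ∈ ℝⁿ with |a_i| ≤ 1 for all i, and let x ∈ [0,1]ⁿ be deterministic. Let y be an ℝⁿ-valued random vector such that: E[y_i] = 0 for all i; for every c ∈ ℝⁿ, E[(Σ_i c_i y_i)²] ≤ η·Σ_i c_i²·E[y_i²]; and almost surely x + y ∈ [0,1]ⁿ and Σ_i y_i² ≤ 1/2. Then the random variable Y := Σ_i a_i y_i + λ·Σ_i a_i²·y_i·(1 − 2x_i − y_i) satisfies E[Y] ≤ −(λ/(8η))·E[Y²]. -/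
open MeasureTheory

/-- Arithmetic for `E[T²] ≤ 3ηQ` given `T = U - V`. -/
lemma drift_aux_T {Ω : Type*} [MeasurableSpace Ω] (μ : Measure Ω) [IsProbabilityMeasure μ]
    (η Q : ℝ) (hη : 1 ≤ η) (hQ : 0 ≤ Q)
    (U V T : Ω → ℝ) (hTUV : ∀ ω, T ω = U ω - V ω)
    (hU2int : Integrable (fun ω => (U ω) ^ 2) μ)
    (hV2int : Integrable (fun ω => (V ω) ^ 2) μ)
    (hT2int : Integrable (fun ω => (T ω) ^ 2) μ)
    (hU2 : ∫ ω, (U ω) ^ 2 ∂μ ≤ η * Q)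
    (hV2 : ∫ ω, (V ω) ^ 2 ∂μ ≤ Q / 2) :
    ∫ ω, (T ω) ^ 2 ∂μ ≤ 3 * η * Q := by
  have h1 : ∫ ω, (T ω) ^ 2 ∂μ ≤ ∫ ω, (2 * (U ω) ^ 2 + 2 * (V ω) ^ 2) ∂μ := by
    refine integral_mono_ae hT2int ((hU2int.const_mul 2).add (hV2int.const_mul 2)) ?_
    filter_upwards with ω
    rw [hTUV ω]
    nlinarith [sq_nonneg (U ω + V ω)]
  have h2 : ∫ ω, (2 * (U ω) ^ 2 + 2 * (V ω) ^ 2) ∂μ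
      = 2 * ∫ ω, (U ω) ^ 2 ∂μ + 2 * ∫ ω, (V ω) ^ 2 ∂μ := by
    rw [integral_add (hU2int.const_mul 2) (hV2int.const_mul 2),
      integral_const_mul, integral_const_mul]
  nlinarith

/-- Final arithmetic of the drift bound. -/
lemma drift_aux_final {Ω : Type*} [MeasurableSpace Ω] (μ : Measure Ω) [IsProbabilityMeasure μ]
    (η lam Q : ℝ) (hη : 1 ≤ η) (hlam0 : 0 < lam) (hlam1 : lam ≤ 1) (hQ : 0 ≤ Q)
    (S T : Ω → ℝ) (hSint : Integrable S μ) (hTint : Integrable T μ)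
    (hS2int : Integrable (fun ω => (S ω) ^ 2) μ)
    (hT2int : Integrable (fun ω => (T ω) ^ 2) μ)
    (hY2int : Integrable (fun ω => (S ω + lam * T ω) ^ 2) μ)
    (hES : ∫ ω, S ω ∂μ = 0) (hET : ∫ ω, T ω ∂μ = -Q)
    (hES2 : ∫ ω, (S ω) ^ 2 ∂μ ≤ η * Q) (hET2 : ∫ ω, (T ω) ^ 2 ∂μ ≤ 3 * η * Q) :
    ∫ ω, (S ω + lam * T ω) ∂μ ≤ -(lam / (8 * η)) * ∫ ω, (S ω + lam * T ω) ^ 2 ∂μ := by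
  have hEY : ∫ ω, (S ω + lam * T ω) ∂μ = -(lam * Q) := by
    rw [integral_add hSint (hTint.const_mul lam), integral_const_mul, hES, hET]
    ring
  have hE2nonneg : 0 ≤ ∫ ω, (S ω + lam * T ω) ^ 2 ∂μ :=
    integral_nonneg fun ω => sq_nonneg _
  have hE2 : ∫ ω, (S ω + lam * T ω) ^ 2 ∂μ ≤ 8 * η * Q := by
    have h1 : ∫ ω, (S ω + lam * T ω) ^ 2 ∂μ
        ≤ ∫ ω, (2 * (S ω) ^ 2 + 2 * lam ^ 2 * (T ω) ^ 2) ∂μ := by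
      refine integral_mono_ae hY2int
        ((hS2int.const_mul 2).add (hT2int.const_mul (2 * lam ^ 2))) ?_
      filter_upwards with ω
      nlinarith [sq_nonneg (S ω - lam * T ω)]
    have h2 : ∫ ω, (2 * (S ω) ^ 2 + 2 * lam ^ 2 * (T ω) ^ 2) ∂μ
        = 2 * ∫ ω, (S ω) ^ 2 ∂μ + 2 * lam ^ 2 * ∫ ω, (T ω) ^ 2 ∂μ := by
      rw [integral_add (hS2int.const_mul 2) (hT2int.const_mul (2 * lam ^ 2)),
        integral_const_mul, integral_const_mul]
    have hl2 : lam ^ 2 ≤ 1 := by nlinarith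
    have h3 : 2 * lam ^ 2 * ∫ ω, (T ω) ^ 2 ∂μ ≤ 2 * (3 * η * Q) := by
      have hT2nn : 0 ≤ ∫ ω, (T ω) ^ 2 ∂μ := integral_nonneg fun ω => sq_nonneg _
      nlinarith
    linarith
  rw [hEY]
  have h8 : (0 : ℝ) < 8 * η := by linarith
  have : lam / (8 * η) * ∫ ω, (S ω + lam * T ω) ^ 2 ∂μ ≤ lam * Q := by
    rw [div_mul_eq_mul_div, div_le_iff₀ h8]
    nlinarith
  linarith

/-- **Drift bound (Claim 4.2).**
Let `n ≥ 1`, `η ≥ 1`, `0 < λ ≤ 1`, `|a_i| ≤ 1`, `x ∈ [0,1]ⁿ` deterministic, and let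
`y` be a random vector with `E[y_i] = 0`, `η`-almost pairwise independent
(`E[(Σ_i c_i y_i)²] ≤ η·Σ_i c_i²·E[y_i²]` for all `c`), and almost surely
`x + y ∈ [0,1]ⁿ` and `Σ_i y_i² ≤ 1/2`. Then
`Y = Σ_i a_i y_i + λ·Σ_i a_i²·y_i·(1 − 2x_i − y_i)` satisfies
`E[Y] ≤ −(λ/(8η))·E[Y²]`. -/
theorem drift_bound {n : ℕ} (hn : 1 ≤ n) (η : ℝ) (hη : 1 ≤ η)
    (lam : ℝ) (hlam0 : 0 < lam) (hlam1 : lam ≤ 1)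
    (a : Fin n → ℝ) (ha : ∀ i, |a i| ≤ 1)
    (x : Fin n → ℝ) (hx : ∀ i, x i ∈ Set.Icc (0 : ℝ) 1)
    {Ω : Type*} [MeasurableSpace Ω] (μ : Measure Ω) [IsProbabilityMeasure μ]
    (y : Ω → Fin n → ℝ) (hym : ∀ i, Measurable fun ω => y ω i)
    (hmean : ∀ i, ∫ ω, y ω i ∂μ = 0)
    (hpairwise : ∀ c : Fin n → ℝ,
      ∫ ω, (∑ i, c i * y ω i) ^ 2 ∂μ ≤ η * ∑ i, (c i) ^ 2 * ∫ ω, (y ω i) ^ 2 ∂μ)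
    (hxy : ∀ᵐ ω ∂μ, ∀ i, x i + y ω i ∈ Set.Icc (0 : ℝ) 1)
    (hysq : ∀ᵐ ω ∂μ, ∑ i, (y ω i) ^ 2 ≤ 1 / 2) :
    (∫ ω, (∑ i, a i * y ω i +
        lam * ∑ i, (a i) ^ 2 * y ω i * (1 - 2 * x i - y ω i)) ∂μ) ≤
      -(lam / (8 * η)) *
        ∫ ω, (∑ i, a i * y ω i +
          lam * ∑ i, (a i) ^ 2 * y ω i * (1 - 2 * x i - y ω i)) ^ 2 ∂μ := by
  -- abbreviations
  set S : Ω → ℝ := fun ω => ∑ i, a i * y ω i with hSdef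
  set T : Ω → ℝ := fun ω => ∑ i, (a i) ^ 2 * y ω i * (1 - 2 * x i - y ω i) with hTdef
  set U : Ω → ℝ := fun ω => ∑ i, ((a i) ^ 2 * (1 - 2 * x i)) * y ω i with hUdef
  set V : Ω → ℝ := fun ω => ∑ i, (a i) ^ 2 * (y ω i) ^ 2 with hVdef
  set Q : ℝ := ∑ i, (a i) ^ 2 * ∫ ω, (y ω i) ^ 2 ∂μ with hQdef
  -- basic a.e. bound on y
  have hy1 : ∀ᵐ ω ∂μ, ∀ i, |y ω i| ≤ 1 := by
    filter_upwards [hxy] with ω h i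
    have h1 := (h i).1
    have h2 := (h i).2
    have h3 := (hx i).1
    have h4 := (hx i).2
    rw [abs_le]; constructor <;> linarith
  -- integrability helper
  have intb : ∀ (f : Ω → ℝ) (C : ℝ), Measurable f → (∀ᵐ ω ∂μ, |f ω| ≤ C) →
      Integrable f μ := by
    intro f C hf h
    exact (integrable_const C).mono' hf.aestronglyMeasurable
      (by simpa [Real.norm_eq_abs] using h)
  -- measurability
  have hSm : Measurable S := by apply Finset.measurable_sum; intro i _; exact (hym i).const_mul _
  have hTm : Measurable T := by
    apply Finset.measurable_sum; intro i _
    exact (((hym i).const_mul _).mul ((measurable_const.sub measurable_const).sub (hym i)))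
  have hUm : Measurable U := by apply Finset.measurable_sum; intro i _; exact (hym i).const_mul _
  have hVm : Measurable V := by
    apply Finset.measurable_sum; intro i _; exact ((hym i).pow_const 2).const_mul _
  -- a.e. bounds for the aggregates
  have hSb : ∀ᵐ ω ∂μ, |S ω| ≤ n := by
    filter_upwards [hy1] with ω h
    calc |S ω| ≤ ∑ i, |a i * y ω i| := Finset.abs_sum_le_sum_abs _ _
      _ ≤ ∑ i : Fin n, (1 : ℝ) := by
          apply Finset.sum_le_sum; intro i _
          rw [abs_mul]
          exact mul_le_one₀ (ha i) (abs_nonneg _) (h i)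
      _ = n := by simp
  have hTb : ∀ᵐ ω ∂μ, |T ω| ≤ 2 * n := by
    filter_upwards [hy1] with ω h
    calc |T ω| ≤ ∑ i, |(a i) ^ 2 * y ω i * (1 - 2 * x i - y ω i)| :=
          Finset.abs_sum_le_sum_abs _ _
      _ ≤ ∑ i : Fin n, (2 : ℝ) := by
          apply Finset.sum_le_sum; intro i _
          have ha2 : |(a i) ^ 2| ≤ 1 := by
            rw [abs_pow]; nlinarith [ha i, abs_nonneg (a i)]
          have hxi : |1 - 2 * x i - y ω i| ≤ 2 := by
            have h1 := (hx i).1; have h2 := (hx i).2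
            have := abs_le.mp (h i)
            rw [abs_le]; constructor <;> linarith
          rw [abs_mul, abs_mul]
          calc |(a i) ^ 2| * |y ω i| * |1 - 2 * x i - y ω i|
              ≤ 1 * 1 * 2 := by
                apply mul_le_mul _ hxi (abs_nonneg _) (by norm_num)
                rw [one_mul]; exact mul_le_one₀ ha2 (abs_nonneg _) (h i)
            _ = 2 := by norm_num
      _ = 2 * n := by simp [mul_comm]
  have hUb : ∀ᵐ ω ∂μ, |U ω| ≤ n := by
    filter_upwards [hy1] with ω h
    calc |U ω| ≤ ∑ i, |((a i) ^ 2 * (1 - 2 * x i)) * y ω i| := Finset.abs_sum_le_sum_abs _ _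
      _ ≤ ∑ i : Fin n, (1 : ℝ) := by
          apply Finset.sum_le_sum; intro i _
          rw [abs_mul, abs_mul]
          have ha2 : |(a i) ^ 2| ≤ 1 := by
            rw [abs_pow]; nlinarith [ha i, abs_nonneg (a i)]
          have hxi : |1 - 2 * x i| ≤ 1 := by
            have h1 := (hx i).1; have h2 := (hx i).2
            rw [abs_le]; constructor <;> linarith
          calc |(a i) ^ 2| * |1 - 2 * x i| * |y ω i| ≤ 1 * 1 * 1 := by
                apply mul_le_mul _ (h i) (abs_nonneg _) (by norm_num)
                rw [one_mul]; exact mul_le_one₀ ha2 (abs_nonneg _) hxi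
            _ = 1 := by norm_num
      _ = n := by simp
  have hVb : ∀ᵐ ω ∂μ, 0 ≤ V ω ∧ V ω ≤ 1 / 2 := by
    filter_upwards [hysq] with ω h
    constructor
    · apply Finset.sum_nonneg; intro i _; positivity
    · calc V ω ≤ ∑ i, (y ω i) ^ 2 := by
            apply Finset.sum_le_sum; intro i _
            have ha2 : (a i) ^ 2 ≤ 1 := by nlinarith [ha i, abs_nonneg (a i), sq_abs (a i)]
            nlinarith [sq_nonneg (y ω i)]
        _ ≤ 1 / 2 := h
  -- integrability of everything
  have sq_bound : ∀ (f : Ω → ℝ) (C : ℝ), 0 ≤ C → (∀ᵐ ω ∂μ, |f ω| ≤ C) →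
      (∀ᵐ ω ∂μ, |(f ω) ^ 2| ≤ C ^ 2) := by
    intro f C hC h
    filter_upwards [h] with ω h
    rw [abs_pow]
    exact pow_le_pow_left₀ (abs_nonneg _) h 2
  have hnn : (0 : ℝ) ≤ n := Nat.cast_nonneg n
  have hSint : Integrable S μ := intb S n hSm hSb
  have hTint : Integrable T μ := intb T (2 * n) hTm hTb
  have hS2int : Integrable (fun ω => (S ω) ^ 2) μ :=
    intb _ (n ^ 2) (hSm.pow_const 2) (sq_bound S n hnn hSb)
  have hT2int : Integrable (fun ω => (T ω) ^ 2) μ :=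
    intb _ ((2 * n) ^ 2) (hTm.pow_const 2) (sq_bound T (2 * n) (by linarith) hTb)
  have hU2int : Integrable (fun ω => (U ω) ^ 2) μ :=
    intb _ (n ^ 2) (hUm.pow_const 2) (sq_bound U n hnn hUb)
  have hVint : Integrable V μ := by
    refine intb V (1 / 2) hVm ?_
    filter_upwards [hVb] with ω h
    rw [abs_le]; constructor <;> linarith [h.1, h.2]
  have hV2int : Integrable (fun ω => (V ω) ^ 2) μ := by
    refine intb _ (1 / 4) (hVm.pow_const 2) ?_
    filter_upwards [hVb] with ω h
    rw [abs_le]; constructor <;> nlinarith [h.1, h.2]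
  have hY2int : Integrable (fun ω => (S ω + lam * T ω) ^ 2) μ := by
    refine intb _ ((n + lam * (2 * n)) ^ 2)
      ((hSm.add (hTm.const_mul lam)).pow_const 2) ?_
    filter_upwards [hSb, hTb] with ω h1 h2
    rw [abs_pow]
    apply pow_le_pow_left₀ (abs_nonneg _)
    calc |S ω + lam * T ω| ≤ |S ω| + |lam * T ω| := abs_add_le _ _
      _ ≤ n + lam * (2 * n) := by
          rw [abs_mul, abs_of_pos hlam0]
          have := mul_le_mul_of_nonneg_left h2 hlam0.le
          linarith
  -- component integrabilities
  have hyib : ∀ i, ∀ᵐ ω ∂μ, |y ω i| ≤ 1 := fun i => by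
    filter_upwards [hy1] with ω h; exact h i
  have hyint : ∀ i, Integrable (fun ω => y ω i) μ := fun i => intb _ 1 (hym i) (hyib i)
  have hy2int : ∀ i, Integrable (fun ω => (y ω i) ^ 2) μ := fun i =>
    intb _ 1 ((hym i).pow_const 2)
      (by filter_upwards [hyib i] with ω h; rw [abs_pow]; nlinarith [abs_nonneg (y ω i)])
  have hy2nn : ∀ i, 0 ≤ ∫ ω, (y ω i) ^ 2 ∂μ := fun i => integral_nonneg fun ω => sq_nonneg _
  have hQnn : 0 ≤ Q := by
    apply Finset.sum_nonneg; intro i _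
    exact mul_nonneg (sq_nonneg _) (hy2nn i)
  -- E[S] = 0
  have hES : ∫ ω, S ω ∂μ = 0 := by
    rw [hSdef, integral_finset_sum _ fun i _ => (hyint i).const_mul (a i)]
    simp only [integral_const_mul, hmean, mul_zero, Finset.sum_const_zero]
  -- E[T] = -Q
  have hET : ∫ ω, T ω ∂μ = -Q := by
    have hterm : ∀ i : Fin n, Integrable (fun ω => (a i) ^ 2 * y ω i * (1 - 2 * x i - y ω i)) μ := by
      intro i
      have : (fun ω => (a i) ^ 2 * y ω i * (1 - 2 * x i - y ω i))
          = fun ω => ((a i) ^ 2 * (1 - 2 * x i)) * y ω i - (a i) ^ 2 * (y ω i) ^ 2 := by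
        funext ω; ring
      rw [this]
      exact ((hyint i).const_mul _).sub ((hy2int i).const_mul _)
    rw [hTdef, integral_finset_sum _ fun i _ => hterm i]
    have : ∀ i : Fin n, ∫ ω, (a i) ^ 2 * y ω i * (1 - 2 * x i - y ω i) ∂μ
        = -((a i) ^ 2 * ∫ ω, (y ω i) ^ 2 ∂μ) := by
      intro i
      have heq : (fun ω => (a i) ^ 2 * y ω i * (1 - 2 * x i - y ω i))
          = fun ω => ((a i) ^ 2 * (1 - 2 * x i)) * y ω i - (a i) ^ 2 * (y ω i) ^ 2 := by
        funext ω; ring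
      rw [heq, integral_sub ((hyint i).const_mul _) ((hy2int i).const_mul _),
        integral_const_mul, integral_const_mul, hmean i]
      ring
    rw [Finset.sum_congr rfl fun i _ => this i, hQdef]
    rw [← Finset.sum_neg_distrib]
  -- E[S²] ≤ ηQ
  have hES2 : ∫ ω, (S ω) ^ 2 ∂μ ≤ η * Q := hpairwise a
  -- E[U²] ≤ ηQ
  have hEU2 : ∫ ω, (U ω) ^ 2 ∂μ ≤ η * Q := by
    refine le_trans (hpairwise fun i => (a i) ^ 2 * (1 - 2 * x i)) ?_
    apply mul_le_mul_of_nonneg_left _ (by linarith : (0:ℝ) ≤ η)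
    apply Finset.sum_le_sum; intro i _
    apply mul_le_mul_of_nonneg_right _ (hy2nn i)
    have ha2 : (a i) ^ 2 ≤ 1 := by nlinarith [ha i, abs_nonneg (a i), sq_abs (a i)]
    have hxi : (1 - 2 * x i) ^ 2 ≤ 1 := by
      have h1 := (hx i).1; have h2 := (hx i).2; nlinarith
    calc ((a i) ^ 2 * (1 - 2 * x i)) ^ 2 = (a i) ^ 2 * ((a i) ^ 2 * (1 - 2 * x i) ^ 2) := by ring
      _ ≤ (a i) ^ 2 * 1 := by
          exact mul_le_mul_of_nonneg_left (mul_le_one₀ ha2 (sq_nonneg _) hxi) (sq_nonneg _)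
      _ = (a i) ^ 2 := by ring
  -- E[V] = Q
  have hEV : ∫ ω, V ω ∂μ = Q := by
    rw [hVdef, integral_finset_sum _ fun i _ => (hy2int i).const_mul _]
    simp only [integral_const_mul, hQdef]
  -- E[V²] ≤ Q/2
  have hEV2 : ∫ ω, (V ω) ^ 2 ∂μ ≤ Q / 2 := by
    have h1 : ∫ ω, (V ω) ^ 2 ∂μ ≤ ∫ ω, (1 / 2) * V ω ∂μ := by
      refine integral_mono_ae hV2int (hVint.const_mul _) ?_
      filter_upwards [hVb] with ω h
      nlinarith [h.1, h.2]
    rw [integral_const_mul, hEV] at h1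
    linarith
  -- E[T²] ≤ 3ηQ
  have hET2 : ∫ ω, (T ω) ^ 2 ∂μ ≤ 3 * η * Q := by
    refine drift_aux_T μ η Q hη hQnn U V T ?_ hU2int hV2int hT2int hEU2 hEV2
    intro ω; rw [hTdef, hUdef, hVdef]
    simp only
    rw [← Finset.sum_sub_distrib]
    apply Finset.sum_congr rfl; intro i _; ring
  exact drift_aux_final μ η lam Q hη hlam0 hlam1 hQnn S T hSint hTint hS2int hT2int hY2int
    hES hET hES2 hET2
end

section
/- Let 0 ≤ δ < 1/2, let M be a finite set of machines and R a finite set of jobs, and let x ∈ [0,1]^{M×R} satisfy, for every job j ∈ R: Σ_{i∈M} x_{ij} = 1 and x_{ij} < 1 for all i ∈ M. Let n = |{(i,j) ∈ M×R : x_{ij} > 0}| be the number of nonzero (hence strictly fractional) entries, r = |R|, and for each machine i define the excess e_i = Σ_{j∈R : x_{ij}>0} (1 − x_{ij}). Then the number of machines i with e_i > 1/(1−2δ) is at most (1−2δ)·(n − r). -/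
open Finset

/-- **Counting machines with large excess (Claim 5.5).**
Let `x ∈ [0,1]^{M×R}` be a fractional assignment with `Σ_i x_{ij} = 1` and
`x_{ij} < 1` for every job `j`. Let `n` be the number of nonzero (hence strictly
fractional) entries, `r = |R|`, and let `e_i = Σ_{j : x_{ij} > 0} (1 − x_{ij})` be the
excess of machine `i`. Then for `0 ≤ δ < 1/2`, the number of machines with
`e_i > 1/(1−2δ)` is at most `(1−2δ)·(n − r)`. -/
theorem count_large_excess_machines {M R : Type*} [Fintype M] [Fintype R]
    [DecidableEq M] [DecidableEq R]
    (x : M → R → ℝ) (hx0 : ∀ i j, 0 ≤ x i j) (hx1 : ∀ i j, x i j < 1)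
    (hassign : ∀ j, ∑ i, x i j = 1)
    (δ : ℝ) (hδ0 : 0 ≤ δ) (hδ1 : δ < 1 / 2) :
    ((Finset.univ.filter fun i : M =>
        1 / (1 - 2 * δ) < ∑ j ∈ Finset.univ.filter fun j => 0 < x i j, (1 - x i j)).card : ℝ) ≤
      (1 - 2 * δ) *
        (((Finset.univ.filter fun q : M × R => 0 < x q.1 q.2).card : ℝ) - Fintype.card R) := by
  have hcpos : (0:ℝ) < 1 - 2 * δ := by linarith
  set e : M → ℝ := fun i => ∑ j ∈ Finset.univ.filter fun j => 0 < x i j, (1 - x i j) with he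
  have he0 : ∀ i, 0 ≤ e i := fun i =>
    Finset.sum_nonneg fun j _ => by have := hx1 i j; linarith
  -- total sum of excesses equals n - r
  have hsum : ∑ i, e i =
      ((Finset.univ.filter fun q : M × R => 0 < x q.1 q.2).card : ℝ) - Fintype.card R := by
    have h1 : ∑ i, e i = ∑ q ∈ (Finset.univ.filter fun q : M × R => 0 < x q.1 q.2),
        (1 - x q.1 q.2) := by
      rw [Finset.sum_filter, Fintype.sum_prod_type]
      simp only [he, Finset.sum_filter]
    have h2 : ∑ q ∈ (Finset.univ.filter fun q : M × R => 0 < x q.1 q.2), x q.1 q.2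
        = (Fintype.card R : ℝ) := by
      have : ∑ q ∈ (Finset.univ.filter fun q : M × R => 0 < x q.1 q.2), x q.1 q.2
          = ∑ q : M × R, x q.1 q.2 := by
        apply Finset.sum_filter_of_ne
        intro q _ hq
        exact lt_of_le_of_ne (hx0 q.1 q.2) (Ne.symm hq)
      rw [this, Fintype.sum_prod_type_right]
      simp [hassign]
    rw [h1, Finset.sum_sub_distrib, Finset.sum_const, h2]
    simp [mul_comm]
  set S := Finset.univ.filter fun i : M => 1 / (1 - 2 * δ) < e i with hS
  have hcard : (S.card : ℝ) * (1 / (1 - 2 * δ)) ≤ ∑ i ∈ S, e i := by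
    rw [show (S.card : ℝ) * (1 / (1 - 2 * δ)) = ∑ _i ∈ S, (1 / (1 - 2 * δ)) by
      rw [Finset.sum_const, nsmul_eq_mul]]
    exact Finset.sum_le_sum fun i hi => le_of_lt (Finset.mem_filter.mp hi).2
  have hle : ∑ i ∈ S, e i ≤ ∑ i, e i :=
    Finset.sum_le_sum_of_subset_of_nonneg (Finset.subset_univ S) fun i _ _ => he0 i
  have key : (S.card : ℝ) * (1 / (1 - 2 * δ)) ≤
      ((Finset.univ.filter fun q : M × R => 0 < x q.1 q.2).card : ℝ) - Fintype.card R := by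
    calc (S.card : ℝ) * (1 / (1 - 2 * δ)) ≤ ∑ i ∈ S, e i := hcard
      _ ≤ ∑ i, e i := hle
      _ = _ := hsum
  have := mul_le_mul_of_nonneg_left key (le_of_lt hcpos)
  calc (S.card : ℝ) = (1 - 2 * δ) * ((S.card : ℝ) * (1 / (1 - 2 * δ))) := by
        field_simp
    _ ≤ _ := this
end

section
/- Let t ≥ 2 be an integer and let G = (V,E) be a finite connected graph that is not a cycle and that contains no path v_1, v_2, …, v_t of t vertices in which every v_i has degree exactly 2 in G. Let d_2 be the number of vertices of G of degree exactly 2 and d_{≥3} the number of vertices of degree at least 3. Then |E| ≥ (1 + 1/(4t))·(d_2 + d_{≥3}). -/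
/-!
Follow each dart `(v, w)` out of a degree-two vertex `v` backwards through degree-two vertices.
The walk cannot close up (then `G` would be a cycle) and must stop within `t - 1` steps (else it
would contain `t` consecutive degree-two vertices), so it ends at a vertex `u` of degree `≠ 2`.
Since degree-two vertices leave no choice, the first dart out of `u` and the length of the walk
determine `(v, w)`. Hence `2 d₂ ≤ (t - 1) N`, where `N` is the degree sum over the vertices of
degree `≠ 2`; together with `2 |E| = 2 d₂ + N` and `3 d_{≥3} ≤ N` this gives the bound.
-/

open Finset

namespace SimpleGraph

variable {V : Type*} {G : SimpleGraph V}

theorem eq_or_eq_of_degree_eq_two {a b c d : V} [Fintype (G.neighborSet c)]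
    (hc : G.degree c = 2) (ha : G.Adj c a) (hb : G.Adj c b) (hab : a ≠ b) (hd : G.Adj c d) :
    d = a ∨ d = b := by
  classical
  have hpair : ({a, b} : Finset V) = G.neighborFinset c :=
    eq_of_subset_of_card_le (by simp [insert_subset_iff, ha, hb])
      (by rw [card_neighborFinset_eq_degree, hc, card_pair hab])
  have hd' : d ∈ ({a, b} : Finset V) := hpair ▸ (G.mem_neighborFinset c d).mpr hd
  simpa using hd'

theorem Reachable.mem_of_forall_adj_mem {s : Set V} (hs : ∀ x ∈ s, ∀ y, G.Adj x y → y ∈ s)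
    {u v : V} (huv : G.Reachable u v) (hu : u ∈ s) : v ∈ s := by
  obtain ⟨w⟩ := huv
  induction w with
  | nil => exact hu
  | cons h _ ih => exact ih (hs _ hu _ h)

theorem Walk.IsCycle.neighborSet_subset_support {u x : V} {c : G.Walk u u} (hc : c.IsCycle)
    [Fintype (G.neighborSet x)] (hx : x ∈ c.support) (hdeg : G.degree x = 2) :
    G.neighborSet x ⊆ {y | y ∈ c.support} := by
  have hsub := c.toSubgraph.neighborSet_subset x
  have heq : c.toSubgraph.neighborSet x = G.neighborSet x :=
    Set.eq_of_subset_of_ncard_le hsub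
      (by rw [hc.ncard_neighborSet_toSubgraph_eq_two hx, Set.ncard_eq_toFinset_card',
        Set.toFinset_card, card_neighborSet_eq_degree, hdeg]) (Set.toFinite _)
  rw [← heq, ← c.verts_toSubgraph]
  exact c.toSubgraph.neighborSet_subset_verts x

theorem exists_adj_notMem_support_of_degree_eq_two [LocallyFinite G] (hconn : G.Connected)
    (hG : ¬ ∀ x, G.degree x = 2) {u v : V} {p : G.Walk u v} (hp : p.IsPath)
    (hdeg : ∀ z ∈ p.support, G.degree z = 2) : ∃ z, G.Adj z u ∧ z ∉ p.support := by
  classical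
  by_contra! hclosed
  obtain ⟨z, hz, hz_snd⟩ := exists_mem_ne (s := G.neighborFinset u)
    (by rw [card_neighborFinset_eq_degree, hdeg u p.start_mem_support]; norm_num) p.snd
  have huz : G.Adj u z := (G.mem_neighborFinset u z).mp hz
  have hzp : z ∈ p.support := hclosed z huz.symm
  set c := Walk.cons huz.symm (p.takeUntil z hzp)
  -- the edge back to `u` is not the first edge of the path, so it closes a genuine cycle
  have hc : c.IsCycle := by
    refine (Walk.cons_isCycle_iff _ _).mpr ⟨hp.takeUntil hzp, fun he => hz_snd ?_⟩
    have hlen := (hp.takeUntil hzp).length_eq_one_of_mem_edges (Sym2.eq_swap ▸ he)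
    rw [← p.snd_takeUntil huz.ne' hzp, Walk.snd, ← hlen, Walk.getVert_length]
  have hcp : ∀ x ∈ c.support, x ∈ p.support := by
    simpa [c, hzp] using fun x (hx : x ∈ _) => p.support_takeUntil_subset_support hzp hx
  have hc_closed : ∀ x ∈ {x | x ∈ c.support}, ∀ y, G.Adj x y → y ∈ {x | x ∈ c.support} :=
    fun x hx _ hxy => hc.neighborSet_subset_support hx (hdeg x (hcp x hx)) hxy
  refine hG fun x => hdeg x (hcp x ?_)
  exact (hconn.preconnected z x).mem_of_forall_adj_mem hc_closed c.start_mem_support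

def HasDegreeTwoPath [LocallyFinite G] (n : ℕ) : Prop :=
  ∃ (u v : V) (p : G.Walk u v), p.IsPath ∧ p.length = n ∧ ∀ z ∈ p.support, G.degree z = 2

theorem exists_isPath_from_degree_ne_two [LocallyFinite G] (hconn : G.Connected)
    (hG : ¬ ∀ x, G.degree x = 2) {n : ℕ} (hn : ¬ G.HasDegreeTwoPath n) {u v : V}
    (p : G.Walk u v) (hp : p.IsPath) (hnil : ¬ p.Nil) (hlen : p.length ≤ n)
    (htail : ∀ z ∈ p.support.tail, G.degree z = 2) :
    ∃ (y : V) (q : G.Walk y v), q.IsPath ∧ 0 < q.length ∧ q.length ≤ n ∧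
      q.penultimate = p.penultimate ∧ G.degree y ≠ 2 ∧ ∀ z ∈ q.support.tail, G.degree z = 2 := by
  by_cases hu : G.degree u = 2
  · have hdeg : ∀ z ∈ p.support, G.degree z = 2 := by
      rw [← p.cons_tail_support]
      exact List.forall_mem_cons.mpr ⟨hu, htail⟩
    have hlt : p.length < n := lt_of_le_of_ne hlen fun h => hn ⟨u, v, p, hp, h, hdeg⟩
    obtain ⟨z, hzu, hz⟩ := exists_adj_notMem_support_of_degree_eq_two hconn hG hp hdeg
    obtain ⟨y, q, hq, hq_pos, hq_len, hq_pen, hy, hq_tail⟩ :=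
      exists_isPath_from_degree_ne_two hconn hG hn (Walk.cons hzu p) (hp.cons hz)
        Walk.not_nil_cons (by simpa using hlt) (by simpa using hdeg)
    exact ⟨y, q, hq, hq_pos, hq_len, hq_pen.trans (Walk.penultimate_cons_of_not_nil _ _ hnil), hy,
      hq_tail⟩
  · exact ⟨u, p, hp, Walk.not_nil_iff_lt_length.mp hnil, hlen, rfl, hu, htail⟩
termination_by n - p.length
decreasing_by simp only [Walk.length_cons]; omega

theorem Walk.IsPath.getVert_eq_of_snd_eq_of_degree_eq_two [LocallyFinite G] {y a b : V}
    {q : G.Walk y a} {q' : G.Walk y b} (hq : q.IsPath) (hq' : q'.IsPath)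
    (hlen : q.length = q'.length) (hsnd : q.snd = q'.snd)
    (hdeg : ∀ z ∈ q.support.tail, G.degree z = 2) (i : ℕ) :
    q.getVert i = q'.getVert i := by
  induction i using Nat.strong_induction_on with
  | _ i ih =>
  match i with
  | 0 => simp
  | 1 => exact hsnd
  | j + 2 =>
    by_cases hj : q.length ≤ j + 1
    · have hend := ih q.length (by omega)
      rw [q.getVert_of_length_le (by omega), q'.getVert_of_length_le (by omega)]
      rwa [q.getVert_length, hlen, q'.getVert_length] at hend
    -- the middle vertex has degree two, and neither walk steps back to the vertex before it
    have hmid := ih (j + 1) (by omega)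
    have hprev := ih j (by omega)
    have hc : G.degree (q.getVert (j + 1)) = 2 :=
      hdeg _ (getVert_mem_tail_support (not_nil_iff_lt_length.mpr (by omega)) (by omega))
    have hskip : ∀ {b : V} {r : G.Walk y b}, r.IsPath → j + 2 ≤ r.length →
        r.getVert j ≠ r.getVert (j + 2) := fun hr hr_len h => by
      have := hr.getVert_injOn (show j ≤ _ by omega) (show j + 2 ≤ _ by omega) h
      omega
    have hstep := q'.adj_getVert_succ (i := j + 1) (by omega)
    rw [← hmid] at hstep
    rcases eq_or_eq_of_degree_eq_two hc (q.adj_getVert_succ (by omega)).symm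
      (q.adj_getVert_succ (by omega)) (hskip hq (by omega)) hstep with h | h
    · exact absurd (h.trans hprev) (hskip hq' (by omega)).symm
    · exact h.symm

section Counting

variable [Fintype V] [DecidableRel G.Adj]

theorem card_filter_dart_fst [DecidableEq V] (P : V → Prop) [DecidablePred P] :
    #{d : G.Dart | P d.fst} = ∑ v with P v, G.degree v := by
  rw [card_eq_sum_card_fiberwise (f := fun d : G.Dart => d.fst) (t := {v | P v})
    fun d hd => by simpa using hd]
  refine sum_congr rfl fun v hv => ?_
  rw [← G.dart_fst_fiber_card_eq_degree v, filter_filter]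
  exact congrArg card <|
    filter_congr fun d _ => ⟨And.right, fun h => ⟨h ▸ (mem_filter.mp hv).2, h⟩⟩

theorem card_dart_degree_eq_two_le (hconn : G.Connected) (hG : ¬ ∀ x, G.degree x = 2) {n : ℕ}
    (hn_pos : 0 < n) (hn : ¬ G.HasDegreeTwoPath n) :
    #{d : G.Dart | G.degree d.fst = 2} ≤ #{d : G.Dart | G.degree d.fst ≠ 2} * n := by
  -- `d` is related to `(e, ℓ)` when the path through degree-two vertices that leaves `d.fst`
  -- backwards along `d` first reaches a vertex of degree `≠ 2` at `e.fst`, after `ℓ` steps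
  let R : G.Dart → G.Dart × ℕ → Prop := fun d e => ∃ q : G.Walk e.1.fst d.fst,
    q.IsPath ∧ q.length = e.2 ∧ q.snd = e.1.snd ∧ q.penultimate = d.snd ∧
      ∀ z ∈ q.support.tail, G.degree z = 2
  have hcard : #(Icc 1 n) = n := by simp
  rw [← hcard, ← card_product]
  refine card_le_card_of_forall_subsingleton R (fun d hd => ?_) (fun e _ d hd d' hd' => ?_)
  · have hd2 : G.degree d.fst = 2 := (mem_filter.mp hd).2
    obtain ⟨y, q, hq, hq_pos, hq_len, hq_pen, hy, hq_tail⟩ :=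
      exists_isPath_from_degree_ne_two hconn hG hn (Walk.cons d.adj.symm Walk.nil)
        (by simp [d.adj.ne']) Walk.not_nil_cons (by simpa using Nat.one_le_of_lt hn_pos)
        (by simpa using hd2)
    exact ⟨(⟨(y, q.snd), q.adj_snd (Walk.not_nil_iff_lt_length.mpr hq_pos)⟩, q.length),
      mem_product.mpr ⟨mem_filter.mpr ⟨mem_univ _, hy⟩, mem_Icc.mpr ⟨hq_pos, hq_len⟩⟩,
      q, hq, rfl, rfl, hq_pen, hq_tail⟩
  · obtain ⟨q, hq, hq_len, hq_snd, hq_pen, hq_tail⟩ := hd.2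
    obtain ⟨q', hq', hq'_len, hq'_snd, hq'_pen, -⟩ := hd'.2
    have key := hq.getVert_eq_of_snd_eq_of_degree_eq_two hq' (hq_len.trans hq'_len.symm)
      (hq_snd.trans hq'_snd.symm) hq_tail
    have hfst : d.fst = d'.fst := by
      have hend := key q.length
      rwa [q.getVert_length, hq_len, ← hq'_len, q'.getVert_length] at hend
    have hsnd : d.snd = d'.snd := by
      rw [← hq_pen, ← hq'_pen, Walk.penultimate, key, hq_len, ← hq'_len]
    exact Dart.ext _ _ (Prod.ext hfst hsnd)

end Counting

end SimpleGraph

theorem one_add_one_div_mul_le {t d₂ d₃ N E : ℝ} (ht : 0 < t) (hN : 0 ≤ N)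
    (hE : 2 * E = 2 * d₂ + N) (h₂ : 2 * d₂ ≤ (t - 1) * N) (h₃ : 3 * d₃ ≤ N) :
    (1 + 1 / (4 * t)) * (d₂ + d₃) ≤ E := by
  have key : (4 * t + 1) * (d₂ + d₃) ≤ 4 * t * E := by
    nlinarith [mul_le_mul_of_nonneg_left h₃ ht.le, mul_nonneg ht.le hN]
  rw [show 1 + 1 / (4 * t) = (4 * t + 1) / (4 * t) by field_simp, div_mul_eq_mul_div,
    div_le_iff₀ (by positivity)]
  linarith

/-- **Graph-theoretic counting lemma (Lemma 5.9).**
Let `t ≥ 2` and let `G` be a finite connected graph that is not a cycle (i.e. not all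
its vertices have degree `2`) and that contains no path on `t` vertices all of whose
vertices have degree exactly `2`. If `d₂` and `d_{≥3}` denote the numbers of vertices
of degree exactly `2` and of degree at least `3`, then
`|E| ≥ (1 + 1/(4t))·(d₂ + d_{≥3})`. -/
theorem edge_count_lower_bound_of_no_long_degree_two_path
    {V : Type*} [Fintype V] [DecidableEq V] (G : SimpleGraph V) [DecidableRel G.Adj]
    (hconn : G.Connected) (t : ℕ) (ht : 2 ≤ t)
    (hnotcycle : ¬ ∀ v, G.degree v = 2)
    (hnopath : ¬ ∃ (u v : V) (w : G.Walk u v), w.IsPath ∧ w.length = t - 1 ∧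
      ∀ z ∈ w.support, G.degree z = 2) :
    (1 + 1 / (4 * (t : ℝ))) *
        (((Finset.univ.filter fun v => G.degree v = 2).card : ℝ) +
          ((Finset.univ.filter fun v => 3 ≤ G.degree v).card : ℝ)) ≤
      (G.edgeFinset.card : ℝ) := by
  set N := ∑ v with G.degree v ≠ 2, G.degree v
  have hE : 2 * #G.edgeFinset = 2 * #{v | G.degree v = 2} + N := by
    rw [← G.sum_degrees_eq_twice_card_edges,
      ← sum_filter_add_sum_filter_not univ (G.degree · = 2),
      sum_const_nat fun v hv => (mem_filter.mp hv).2, mul_comm]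
  have h₃ : 3 * #{v | 3 ≤ G.degree v} ≤ N :=
    calc _ ≤ ∑ v with 3 ≤ G.degree v, G.degree v := by
          rw [mul_comm, ← smul_eq_mul]
          exact card_nsmul_le_sum _ _ _ fun v hv => (mem_filter.mp hv).2
      _ ≤ N := sum_le_sum_of_subset fun v hv => by
          simp only [mem_filter, mem_univ, true_and] at hv ⊢
          omega
  have h₂ : 2 * #{v | G.degree v = 2} ≤ (t - 1) * N := by
    have := SimpleGraph.card_dart_degree_eq_two_le hconn hnotcycle (by omega) hnopath
    rwa [G.card_filter_dart_fst (G.degree · = 2), G.card_filter_dart_fst (G.degree · ≠ 2),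
      sum_const_nat fun v hv => (mem_filter.mp hv).2, mul_comm, mul_comm N] at this
  refine one_add_one_div_mul_le (by positivity) (Nat.cast_nonneg N) (by exact_mod_cast hE) ?_
    (by exact_mod_cast h₃)
  rw [← Nat.cast_pred (by omega)]
  exact_mod_cast h₂
end
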